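/- arXiv:1912.11577 — 5 statements merged into one kernel-verified Lean document; each statement's English description precedes it below -/
import Mathlib

section
/- Let H be a Hopf algebra over a field k. Define on H⊗H the structure: h▷(k⊗l)=h₁kS(h₂)⊗l, (k⊗l)◁h=k⊗lh, ρˡ(k⊗l)=k₁⊗(k₂⊗l), ρʳ(k⊗l)=(k⊗l₂)⊗S(l₁)l₃. Then H⊗H with these structures is a Yetter-Drinfel'd-Long bimodule over H. -/
noncomputable section
open TensorProduct

namespace YDL

variable (K : Type) [Field K] (H : Type) [Ring H] [HopfAlgebra K H]

abbrev mu : H ⊗[K] H →ₗ[K] H := LinearMap.mul' K H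
abbrev cm : H →ₗ[K] H ⊗[K] H := Coalgebra.comul
abbrev cu : H →ₗ[K] K := Coalgebra.counit
abbrev sa : H →ₗ[K] H := HopfAlgebra.antipode (R := K)
abbrev eta : K →ₗ[K] H := Algebra.linearMap K H

/-- Yetter–Drinfel'd–Long bimodule over `H` (Definition 2.1). -/
structure IsYDLong (M : Type) [AddCommGroup M] [Module K M]
    (lact : H ⊗[K] M →ₗ[K] M) (ract : M ⊗[K] H →ₗ[K] M)
    (lcoact : M →ₗ[K] H ⊗[K] M) (rcoact : M →ₗ[K] M ⊗[K] H) : Prop where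
  lact_one : ∀ m : M, lact (1 ⊗ₜ m) = m
  lact_mul : ∀ (g h : H) (m : M), lact ((g * h) ⊗ₜ m) = lact (g ⊗ₜ lact (h ⊗ₜ m))
  ract_one : ∀ m : M, ract (m ⊗ₜ 1) = m
  ract_mul : ∀ (m : M) (g h : H), ract (m ⊗ₜ (g * h)) = ract (ract (m ⊗ₜ g) ⊗ₜ h)
  bimod : ∀ (h : H) (m : M) (g : H),
    ract (lact (h ⊗ₜ m) ⊗ₜ g) = lact (h ⊗ₜ ract (m ⊗ₜ g))
  lcoassoc : (TensorProduct.assoc K H H M).toLinearMap ∘ₗ (cm K H).rTensor M ∘ₗ lcoact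
      = lcoact.lTensor H ∘ₗ lcoact
  lcounit : (TensorProduct.lid K M).toLinearMap ∘ₗ (cu K H).rTensor M ∘ₗ lcoact
      = LinearMap.id
  rcoassoc : (TensorProduct.assoc K M H H).toLinearMap ∘ₗ rcoact.rTensor H ∘ₗ rcoact
      = (cm K H).lTensor M ∘ₗ rcoact
  rcounit : (TensorProduct.rid K M).toLinearMap ∘ₗ (cu K H).lTensor M ∘ₗ rcoact
      = LinearMap.id
  bicomod : rcoact.lTensor H ∘ₗ lcoact
      = (TensorProduct.assoc K H M H).toLinearMap ∘ₗ lcoact.rTensor H ∘ₗ rcoact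
  yd23 : (mu K H).rTensor M ∘ₗ (TensorProduct.comm K H H).toLinearMap.rTensor M
        ∘ₗ (TensorProduct.assoc K H H M).symm.toLinearMap ∘ₗ lcoact.lTensor H ∘ₗ lact.lTensor H
        ∘ₗ (TensorProduct.assoc K H H M).toLinearMap
        ∘ₗ (TensorProduct.comm K H H).toLinearMap.rTensor M ∘ₗ (cm K H).rTensor M
      = TensorProduct.map (mu K H) lact
        ∘ₗ (tensorTensorTensorComm K H H H M).toLinearMap
        ∘ₗ TensorProduct.map (cm K H) lcoact
  long24 : rcoact ∘ₗ lact
      = lact.rTensor H ∘ₗ (TensorProduct.assoc K H M H).symm.toLinearMap ∘ₗ rcoact.lTensor H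
  yd25 : (mu K H).lTensor M ∘ₗ (TensorProduct.comm K H H).toLinearMap.lTensor M
        ∘ₗ (TensorProduct.assoc K M H H).toLinearMap ∘ₗ rcoact.rTensor H ∘ₗ ract.rTensor H
        ∘ₗ (TensorProduct.assoc K M H H).symm.toLinearMap
        ∘ₗ (TensorProduct.comm K H H).toLinearMap.lTensor M ∘ₗ (cm K H).lTensor M
      = TensorProduct.map ract (mu K H)
        ∘ₗ (tensorTensorTensorComm K M H H H).toLinearMap
        ∘ₗ TensorProduct.map rcoact (cm K H)
  long26 : lcoact ∘ₗ ract
      = ract.lTensor H ∘ₗ (TensorProduct.assoc K H M H).toLinearMap ∘ₗ lcoact.rTensor H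

/-- The braiding `ψ_{M,N}(m ⊗ n) = m₍₋₁₎ ▷ n₍₀₎ ⊗ m₍₀₎ ◁ n₍₁₎`. -/
def braid {M N : Type} [AddCommGroup M] [Module K M] [AddCommGroup N] [Module K N]
    (lcoactM : M →ₗ[K] H ⊗[K] M) (ractM : M ⊗[K] H →ₗ[K] M)
    (lactN : H ⊗[K] N →ₗ[K] N) (rcoactN : N →ₗ[K] N ⊗[K] H) :
    M ⊗[K] N →ₗ[K] N ⊗[K] M :=
  TensorProduct.map lactN ractM ∘ₗ (tensorTensorTensorComm K H M N H).toLinearMap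
    ∘ₗ TensorProduct.map lcoactM rcoactN

/-- The inverse braiding `ψ⁻¹_{N,M}(n ⊗ m) = m₍₀₎ ◁ S⁻¹(n₍₁₎) ⊗ S⁻¹(m₍₋₁₎) ▷ n₍₀₎`,
where `Si` is the (given) inverse of the antipode. -/
def braidInv (Si : H →ₗ[K] H) {M N : Type}
    [AddCommGroup M] [Module K M] [AddCommGroup N] [Module K N]
    (lcoactM : M →ₗ[K] H ⊗[K] M) (ractM : M ⊗[K] H →ₗ[K] M)
    (lactN : H ⊗[K] N →ₗ[K] N) (rcoactN : N →ₗ[K] N ⊗[K] H) :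
    N ⊗[K] M →ₗ[K] M ⊗[K] N :=
  TensorProduct.map ractM lactN
    ∘ₗ (TensorProduct.comm K (H ⊗[K] N) (M ⊗[K] H)).toLinearMap
    ∘ₗ (tensorTensorTensorComm K H M N H).toLinearMap
    ∘ₗ (TensorProduct.comm K (N ⊗[K] H) (H ⊗[K] M)).toLinearMap
    ∘ₗ TensorProduct.map (Si.lTensor N ∘ₗ rcoactN) (Si.rTensor M ∘ₗ lcoactM)

/-! Structure maps of `H₁, H₂, H₃, H₄` from Example 2.4. -/

/-- `h ▷ (k ⊗ l) = hk ⊗ l`. -/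
def lactA : H ⊗[K] (H ⊗[K] H) →ₗ[K] H ⊗[K] H :=
  (mu K H).rTensor H ∘ₗ (TensorProduct.assoc K H H H).symm.toLinearMap

/-- `l ⊗ h ↦ S(h₁) l h₂`. -/
def adR : H ⊗[K] H →ₗ[K] H :=
  mu K H ∘ₗ (mu K H ∘ₗ (sa K H).rTensor H ∘ₗ (TensorProduct.comm K H H).toLinearMap).rTensor H
    ∘ₗ (TensorProduct.assoc K H H H).symm.toLinearMap ∘ₗ (cm K H).lTensor H

/-- `(k ⊗ l) ◁ h = k ⊗ S(h₁) l h₂`. -/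
def ractA : (H ⊗[K] H) ⊗[K] H →ₗ[K] H ⊗[K] H :=
  (adR K H).lTensor H ∘ₗ (TensorProduct.assoc K H H H).toLinearMap

/-- `k ↦ k₁ S(k₃) ⊗ k₂`. -/
def c1 : H →ₗ[K] H ⊗[K] H :=
  (mu K H).rTensor H ∘ₗ (TensorProduct.assoc K H H H).symm.toLinearMap
    ∘ₗ ((sa K H).rTensor H ∘ₗ (TensorProduct.comm K H H).toLinearMap).lTensor H
    ∘ₗ (cm K H).lTensor H ∘ₗ cm K H

/-- `ρˡ(k ⊗ l) = k₁ S(k₃) ⊗ (k₂ ⊗ l)`. -/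
def lcoactA : H ⊗[K] H →ₗ[K] H ⊗[K] (H ⊗[K] H) :=
  (TensorProduct.assoc K H H H).toLinearMap ∘ₗ (c1 K H).rTensor H

/-- `ρʳ(k ⊗ l) = (k ⊗ l₁) ⊗ l₂`. -/
def rcoactA : H ⊗[K] H →ₗ[K] (H ⊗[K] H) ⊗[K] H :=
  (TensorProduct.assoc K H H H).symm.toLinearMap ∘ₗ (cm K H).lTensor H

/-- `h ⊗ x ↦ h₁ x S(h₂)`. -/
def ad : H ⊗[K] H →ₗ[K] H :=
  mu K H ∘ₗ (mu K H ∘ₗ (sa K H).lTensor H ∘ₗ (TensorProduct.comm K H H).toLinearMap).lTensor H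
    ∘ₗ (TensorProduct.assoc K H H H).toLinearMap ∘ₗ (cm K H).rTensor H

/-- `h ▷ (k ⊗ l) = h₁ k S(h₂) ⊗ l`. -/
def lactB : H ⊗[K] (H ⊗[K] H) →ₗ[K] H ⊗[K] H :=
  (ad K H).rTensor H ∘ₗ (TensorProduct.assoc K H H H).symm.toLinearMap

/-- `(k ⊗ l) ◁ h = k ⊗ l h`. -/
def ractB : (H ⊗[K] H) ⊗[K] H →ₗ[K] H ⊗[K] H :=
  (mu K H).lTensor H ∘ₗ (TensorProduct.assoc K H H H).toLinearMap

/-- `ρˡ(k ⊗ l) = k₁ ⊗ (k₂ ⊗ l)`. -/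
def lcoactB : H ⊗[K] H →ₗ[K] H ⊗[K] (H ⊗[K] H) :=
  (TensorProduct.assoc K H H H).toLinearMap ∘ₗ (cm K H).rTensor H

/-- `l ↦ l₂ ⊗ S(l₁) l₃`. -/
def c2 : H →ₗ[K] H ⊗[K] H :=
  (mu K H).lTensor H ∘ₗ ((sa K H).rTensor H).lTensor H ∘ₗ (TensorProduct.assoc K H H H).toLinearMap
    ∘ₗ (TensorProduct.comm K H H).toLinearMap.rTensor H ∘ₗ (cm K H).rTensor H ∘ₗ cm K H

/-- `ρʳ(k ⊗ l) = (k ⊗ l₂) ⊗ S(l₁) l₃`. -/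
def rcoactB : H ⊗[K] H →ₗ[K] (H ⊗[K] H) ⊗[K] H :=
  (TensorProduct.assoc K H H H).symm.toLinearMap ∘ₗ (c2 K H).lTensor H

/-- The `u`-map `m ↦ m₍₋₁₎ ▷ (m₍₀₎₍₀₎ ◁ m₍₀₎₍₁₎)`; the `u`-condition says it is the identity. -/
def uMap {M : Type} [AddCommGroup M] [Module K M]
    (lact : H ⊗[K] M →ₗ[K] M) (ract : M ⊗[K] H →ₗ[K] M)
    (lcoact : M →ₗ[K] H ⊗[K] M) (rcoact : M →ₗ[K] M ⊗[K] H) : M →ₗ[K] M :=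
  lact ∘ₗ ract.lTensor H ∘ₗ rcoact.lTensor H ∘ₗ lcoact

/-! Quasitriangular structures. -/

/-- `a ⊗ b ↦ (a ⊗ 1) ⊗ b`. -/
def i13 : H ⊗[K] H →ₗ[K] (H ⊗[K] H) ⊗[K] H :=
  (Algebra.TensorProduct.includeLeft (R := K) (A := H) (B := H) (S := K)).toLinearMap.rTensor H

/-- `a ⊗ b ↦ (1 ⊗ a) ⊗ b`. -/
def i23 : H ⊗[K] H →ₗ[K] (H ⊗[K] H) ⊗[K] H :=
  (Algebra.TensorProduct.includeRight (R := K) (A := H) (B := H)).toLinearMap.rTensor H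

/-- `a ⊗ b ↦ a ⊗ (1 ⊗ b)`. -/
def j13 : H ⊗[K] H →ₗ[K] H ⊗[K] (H ⊗[K] H) :=
  (Algebra.TensorProduct.includeRight (R := K) (A := H) (B := H)).toLinearMap.lTensor H

/-- `a ⊗ b ↦ a ⊗ (b ⊗ 1)`. -/
def j12 : H ⊗[K] H →ₗ[K] H ⊗[K] (H ⊗[K] H) :=
  (Algebra.TensorProduct.includeLeft (R := K) (A := H) (B := H) (S := K)).toLinearMap.lTensor H

/-- Quasitriangular Hopf algebra (Definition 2.2, (QT1)–(QT4)). -/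
structure IsQT (R : H ⊗[K] H) : Prop where
  unit : IsUnit R
  qt1 : (cm K H).rTensor H R = i13 K H R * i23 K H R
  qt2 : (cm K H).lTensor H R = j13 K H R * j12 K H R
  qt3 : ∀ h : H, (TensorProduct.comm K H H) (cm K H h) * R = R * cm K H h
  qt4l : (TensorProduct.lid K H) ((cu K H).rTensor H R) = 1
  qt4r : (TensorProduct.rid K H) ((cu K H).lTensor H R) = 1

/-- Triangular Hopf algebra: quasitriangular with `R⁻¹ = τ(R)`. -/
structure IsTriangular (R : H ⊗[K] H) extends IsQT K H R : Prop where
  tri : R * (TensorProduct.comm K H H) R = 1 ∧ (TensorProduct.comm K H H) R * R = 1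

/-- `ρˡ(m) = R² ⊗ R¹ ▷ m`. -/
def lcoactR {M : Type} [AddCommGroup M] [Module K M]
    (lact : H ⊗[K] M →ₗ[K] M) (R : H ⊗[K] H) : M →ₗ[K] H ⊗[K] M :=
  lact.lTensor H ∘ₗ (TensorProduct.assoc K H H M).toLinearMap
    ∘ₗ TensorProduct.mk K (H ⊗[K] H) M ((TensorProduct.comm K H H) R)

/-- `ρʳ(m) = m ◁ R¹ ⊗ R²`. -/
def rcoactR {M : Type} [AddCommGroup M] [Module K M]
    (ract : M ⊗[K] H →ₗ[K] M) (R : H ⊗[K] H) : M →ₗ[K] M ⊗[K] H :=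
  ract.rTensor H ∘ₗ (TensorProduct.assoc K M H H).symm.toLinearMap
    ∘ₗ (TensorProduct.mk K M (H ⊗[K] H)).flip R

/-! Coquasitriangular structures. -/

/-- The comultiplication of the tensor-product coalgebra `H ⊗ H`. -/
def cm2 : H ⊗[K] H →ₗ[K] (H ⊗[K] H) ⊗[K] (H ⊗[K] H) :=
  (tensorTensorTensorComm K H H H H).toLinearMap ∘ₗ TensorProduct.map (cm K H) (cm K H)

/-- Convolution product on linear forms on `H ⊗ H`. -/
def conv (f g : H ⊗[K] H →ₗ[K] K) : H ⊗[K] H →ₗ[K] K :=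
  LinearMap.mul' K K ∘ₗ TensorProduct.map f g ∘ₗ cm2 K H

/-- `g ⊗ h ↦ ε(g) ε(h)`, the convolution unit. -/
def epsBoth : H ⊗[K] H →ₗ[K] K :=
  LinearMap.mul' K K ∘ₗ TensorProduct.map (cu K H) (cu K H)

/-- Coquasitriangular Hopf algebra (Definition 2.3, (CQT1)–(CQT4)). -/
structure IsCQT (z : H ⊗[K] H →ₗ[K] K) : Prop where
  inv : ∃ z' : H ⊗[K] H →ₗ[K] K, conv K H z z' = epsBoth K H ∧ conv K H z' z = epsBoth K H
  cqt1 : z ∘ₗ (mu K H).lTensor H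
      = LinearMap.mul' K K ∘ₗ TensorProduct.map z z
        ∘ₗ (tensorTensorTensorComm K H H H H).toLinearMap ∘ₗ (cm K H).rTensor (H ⊗[K] H)
  cqt2 : z ∘ₗ (mu K H).rTensor H
      = LinearMap.mul' K K ∘ₗ TensorProduct.map z z
        ∘ₗ (tensorTensorTensorComm K H H H H).toLinearMap
        ∘ₗ (TensorProduct.comm K H H).toLinearMap.lTensor (H ⊗[K] H)
        ∘ₗ (cm K H).lTensor (H ⊗[K] H)
  cqt3 : (TensorProduct.lid K H).toLinearMap
        ∘ₗ TensorProduct.map z (mu K H ∘ₗ (TensorProduct.comm K H H).toLinearMap) ∘ₗ cm2 K H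
      = (TensorProduct.rid K H).toLinearMap ∘ₗ TensorProduct.map (mu K H) z ∘ₗ cm2 K H
  cqt4 : ∀ h : H, z (h ⊗ₜ 1) = cu K H h ∧ z ((1 : H) ⊗ₜ h) = cu K H h

/-- Cotriangular Hopf algebra: coquasitriangular with
`ζ(h₁,g₁) ζ(g₂,h₂) = ε(h) ε(g)`. -/
structure IsCotriangular (z : H ⊗[K] H →ₗ[K] K) extends IsCQT K H z : Prop where
  cot : conv K H z (z ∘ₗ (TensorProduct.comm K H H).toLinearMap) = epsBoth K H

/-- `h ▷ m = ζ(h, m₍₋₁₎) m₍₀₎`. -/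
def lactZ {M : Type} [AddCommGroup M] [Module K M]
    (lcoact : M →ₗ[K] H ⊗[K] M) (z : H ⊗[K] H →ₗ[K] K) : H ⊗[K] M →ₗ[K] M :=
  (TensorProduct.lid K M).toLinearMap ∘ₗ z.rTensor M
    ∘ₗ (TensorProduct.assoc K H H M).symm.toLinearMap ∘ₗ lcoact.lTensor H

/-- `m ◁ h = m₍₀₎ ζ(h, m₍₁₎)`. -/
def ractZ {M : Type} [AddCommGroup M] [Module K M]
    (rcoact : M →ₗ[K] M ⊗[K] H) (z : H ⊗[K] H →ₗ[K] K) : M ⊗[K] H →ₗ[K] M :=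
  (TensorProduct.rid K M).toLinearMap ∘ₗ z.lTensor M
    ∘ₗ (TensorProduct.comm K H H).toLinearMap.lTensor M
    ∘ₗ (TensorProduct.assoc K M H H).toLinearMap ∘ₗ rcoact.rTensor H

end YDL

namespace YDLProof
open Coalgebra
set_option synthInstance.maxHeartbeats 1000000
set_option maxHeartbeats 1000000


section Conv

variable {K : Type} [CommRing K]
variable {C : Type} [AddCommGroup C] [Module K C] [Coalgebra K C]
variable {C' : Type} [AddCommGroup C'] [Module K C'] [Coalgebra K C']
variable {A : Type} [Ring A] [Algebra K A]
variable {B : Type} [Ring B] [Algebra K B]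

/-- Convolution product. -/
def cv (f g : C →ₗ[K] A) : C →ₗ[K] A :=
  LinearMap.mul' K A ∘ₗ TensorProduct.map f g ∘ₗ CoalgebraStruct.comul

/-- Convolution unit. -/
def ce : C →ₗ[K] A := Algebra.linearMap K A ∘ₗ CoalgebraStruct.counit

lemma cv_apply_repr (f g : C →ₗ[K] A) {c : C} {ι : Type*} (r : Repr K c ι) :
    cv f g c = ∑ i ∈ r.index, f (r.left i) * g (r.right i) := by
  simp only [cv, LinearMap.comp_apply, ← r.eq, map_sum, TensorProduct.map_tmul,
    LinearMap.mul'_apply]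

lemma ce_apply (c : C) :
    (ce : C →ₗ[K] A) c = algebraMap K A (CoalgebraStruct.counit (R := K) c) := rfl

lemma comp_cv (φ : A →ₐ[K] B) (f g : C →ₗ[K] A) :
    φ.toLinearMap ∘ₗ cv f g = cv (φ.toLinearMap ∘ₗ f) (φ.toLinearMap ∘ₗ g) := by
  apply LinearMap.ext; intro c
  simp only [LinearMap.comp_apply, cv_apply_repr f g (ℛ K c),
    cv_apply_repr (φ.toLinearMap ∘ₗ f) (φ.toLinearMap ∘ₗ g) (ℛ K c), map_sum, map_mul,
    AlgHom.toLinearMap_apply]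

lemma comp_ce (φ : A →ₐ[K] B) :
    φ.toLinearMap ∘ₗ (ce : C →ₗ[K] A) = ce := by
  apply LinearMap.ext; intro c
  simp [ce_apply, AlgHom.commutes]

lemma cv_comp (ψ : C' →ₗ[K] C)
    (hψ : CoalgebraStruct.comul (R := K) ∘ₗ ψ = TensorProduct.map ψ ψ ∘ₗ CoalgebraStruct.comul)
    (f g : C →ₗ[K] A) : cv f g ∘ₗ ψ = cv (f ∘ₗ ψ) (g ∘ₗ ψ) := by
  unfold cv
  rw [LinearMap.comp_assoc, LinearMap.comp_assoc, hψ,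
    show TensorProduct.map f g ∘ₗ (TensorProduct.map ψ ψ ∘ₗ CoalgebraStruct.comul (R := K))
        = TensorProduct.map (f ∘ₗ ψ) (g ∘ₗ ψ) ∘ₗ CoalgebraStruct.comul from by
      rw [← LinearMap.comp_assoc, ← TensorProduct.map_comp]]

lemma ce_comp (ψ : C' →ₗ[K] C)
    (hψε : CoalgebraStruct.counit (R := K) ∘ₗ ψ = CoalgebraStruct.counit) :
    (ce : C →ₗ[K] A) ∘ₗ ψ = ce := by
  unfold ce
  rw [LinearMap.comp_assoc, hψε]

lemma sum_counit_smul {c : C} {ι : Type*} (r : Repr K c ι) :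
    ∑ i ∈ r.index, Coalgebra.counit (R := K) (r.left i) • r.right i = c := by
  have h := congrArg (TensorProduct.lid K C) (Coalgebra.sum_counit_tmul_eq (R := K) (A := C) r)
  simp only [map_sum, TensorProduct.lid_tmul, one_smul] at h
  exact h

lemma sum_smul_counit {c : C} {ι : Type*} (r : Repr K c ι) :
    ∑ i ∈ r.index, Coalgebra.counit (R := K) (r.right i) • r.left i = c := by
  have h := congrArg (TensorProduct.rid K C) (Coalgebra.sum_tmul_counit_eq (R := K) (A := C) r)
  simp only [map_sum, TensorProduct.rid_tmul, one_smul] at h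
  exact h

lemma cv_ce_left (f : C →ₗ[K] A) : cv ce f = f := by
  apply LinearMap.ext; intro c
  rw [cv_apply_repr ce f (ℛ K c)]
  have : ∀ i ∈ (ℛ K c).index,
      (ce : C →ₗ[K] A) ((ℛ K c).left i) * f ((ℛ K c).right i)
        = f (Coalgebra.counit (R := K) ((ℛ K c).left i) • (ℛ K c).right i) := by
    intro i _
    rw [ce_apply, ← Algebra.smul_def, map_smul]
  rw [Finset.sum_congr rfl this, ← map_sum, sum_counit_smul]

lemma cv_ce_right (f : C →ₗ[K] A) : cv f ce = f := by
  apply LinearMap.ext; intro c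
  rw [cv_apply_repr f ce (ℛ K c)]
  have : ∀ i ∈ (ℛ K c).index,
      f ((ℛ K c).left i) * (ce : C →ₗ[K] A) ((ℛ K c).right i)
        = f (Coalgebra.counit (R := K) ((ℛ K c).right i) • (ℛ K c).left i) := by
    intro i _
    rw [ce_apply, ← Algebra.commutes, ← Algebra.smul_def, map_smul]
  rw [Finset.sum_congr rfl this, ← map_sum, sum_smul_counit]

lemma cv_assoc (f g h : C →ₗ[K] A) : cv (cv f g) h = cv f (cv g h) := by
  apply LinearMap.ext; intro c
  set r := ℛ K c with hr
  have key := Coalgebra.sum_tmul_tmul_eq r (fun i => ℛ K (r.left i)) (fun i => ℛ K (r.right i))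
  have key2 := congrArg (LinearMap.mul' K A ∘ₗ
    TensorProduct.map f (LinearMap.mul' K A ∘ₗ TensorProduct.map g h)) key
  simp only [map_sum, LinearMap.comp_apply, TensorProduct.map_tmul,
    LinearMap.mul'_apply] at key2
  rw [cv_apply_repr (cv f g) h r, cv_apply_repr f (cv g h) r]
  calc ∑ i ∈ r.index, cv f g (r.left i) * h (r.right i)
      = ∑ i ∈ r.index, ∑ j ∈ (ℛ K (r.left i)).index,
          f ((ℛ K (r.left i)).left j) * ((g ((ℛ K (r.left i)).right j)) * h (r.right i)) := by
        refine Finset.sum_congr rfl fun i _ => ?_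
        rw [cv_apply_repr f g (ℛ K (r.left i)), Finset.sum_mul]
        simp [mul_assoc]
    _ = ∑ i ∈ r.index, ∑ j ∈ (ℛ K (r.right i)).index,
          f (r.left i) * (g ((ℛ K (r.right i)).left j) * h ((ℛ K (r.right i)).right j)) := key2
    _ = ∑ i ∈ r.index, f (r.left i) * cv g h (r.right i) := by
        refine Finset.sum_congr rfl fun i _ => ?_
        rw [cv_apply_repr g h (ℛ K (r.right i)), Finset.mul_sum]

lemma cv_cancel {f g h : C →ₗ[K] A} (h1 : cv f g = ce) (h2 : cv g h = ce) : f = h := by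
  have : cv f (cv g h) = cv (cv f g) h := (cv_assoc f g h).symm
  rw [h1, h2, cv_ce_right, cv_ce_left] at this
  exact this

lemma cv_swap_inner {f g h : C →ₗ[K] A} (hswap : cv f g = cv g f) :
    cv f (cv g h) = cv g (cv f h) := by
  rw [← cv_assoc, hswap, cv_assoc]


variable {V : Type} [AddCommGroup V] [Module K V]

lemma sum_counit_smul_map (f : C →ₗ[K] V) {c : C} {ι : Type*} (r : Repr K c ι) :
    ∑ i ∈ r.index, Coalgebra.counit (R := K) (r.left i) • f (r.right i) = f c := by
  have h : ∀ i ∈ r.index, Coalgebra.counit (R := K) (r.left i) • f (r.right i)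
      = f (Coalgebra.counit (R := K) (r.left i) • r.right i) :=
    fun i _ => (map_smul f _ _).symm
  rw [Finset.sum_congr rfl h, ← map_sum, sum_counit_smul]

lemma sum_smul_counit_map (f : C →ₗ[K] V) {c : C} {ι : Type*} (r : Repr K c ι) :
    ∑ i ∈ r.index, Coalgebra.counit (R := K) (r.right i) • f (r.left i) = f c := by
  have h : ∀ i ∈ r.index, Coalgebra.counit (R := K) (r.right i) • f (r.left i)
      = f (Coalgebra.counit (R := K) (r.right i) • r.left i) :=
    fun i _ => (map_smul f _ _).symm
  rw [Finset.sum_congr rfl h, ← map_sum, sum_smul_counit]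

end Conv




section Hopf

variable (K : Type) [Field K] (H : Type) [Ring H] [HopfAlgebra K H]

open YDL

/-- `h ↦ h ⊗ 1`. -/
def i1 : H →ₗ[K] H ⊗[K] H :=
  (Algebra.TensorProduct.includeLeft (R := K) (A := H) (B := H) (S := K)).toLinearMap

/-- `h ↦ 1 ⊗ h`. -/
def i2 : H →ₗ[K] H ⊗[K] H :=
  (Algebra.TensorProduct.includeRight (R := K) (A := H) (B := H)).toLinearMap

/-- `h ⊗ k ↦ ε(k) h`. -/
def p1 : H ⊗[K] H →ₗ[K] H :=
  (TensorProduct.rid K H).toLinearMap ∘ₗ (cu K H).lTensor H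

/-- `h ⊗ k ↦ ε(h) k`. -/
def p2 : H ⊗[K] H →ₗ[K] H :=
  (TensorProduct.lid K H).toLinearMap ∘ₗ (cu K H).rTensor H

@[simp] lemma i1_apply (h : H) : i1 K H h = h ⊗ₜ 1 := rfl
@[simp] lemma i2_apply (h : H) : i2 K H h = 1 ⊗ₜ h := rfl
@[simp] lemma p1_apply (h k : H) : p1 K H (h ⊗ₜ k) = cu K H k • h := by
  simp [p1]
@[simp] lemma p2_apply (h k : H) : p2 K H (h ⊗ₜ k) = cu K H h • k := by
  simp [p2]

lemma comul2_tmul (h k : H) {ι κ : Type*} (rh : Repr K h ι) (rk : Repr K k κ) :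
    CoalgebraStruct.comul (R := K) (A := H ⊗[K] H) (h ⊗ₜ k)
      = ∑ i ∈ rh.index, ∑ j ∈ rk.index,
          (rh.left i ⊗ₜ rk.left j) ⊗ₜ[K] (rh.right i ⊗ₜ[K] rk.right j) := by
  show (tensorTensorTensorComm K H H H H).toLinearMap
      (TensorProduct.map (cm K H) (cm K H) (h ⊗ₜ k)) = _
  rw [TensorProduct.map_tmul]
  show (tensorTensorTensorComm K H H H H) ((cm K H h) ⊗ₜ (cm K H k)) = _
  rw [← rh.eq, ← rk.eq, TensorProduct.sum_tmul]
  rw [map_sum]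
  refine Finset.sum_congr rfl fun i _ => ?_
  rw [TensorProduct.tmul_sum, map_sum]
  refine Finset.sum_congr rfl fun j _ => ?_
  simp [tensorTensorTensorComm_tmul]

/-- The product representation of `comul (h ⊗ₜ k)`. -/
def tmulRepr {h k : H} {ι κ : Type*} (rh : Repr K h ι) (rk : Repr K k κ) :
    Repr K (h ⊗ₜ[K] k : H ⊗[K] H) (ι × κ) where
  index := rh.index ×ˢ rk.index
  left p := rh.left p.1 ⊗ₜ rk.left p.2
  right p := rh.right p.1 ⊗ₜ rk.right p.2
  eq := by
    rw [Finset.sum_product]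
    exact (comul2_tmul K H h k rh rk).symm

lemma cv_tmul {A : Type} [Ring A] [Algebra K A] (f g : H ⊗[K] H →ₗ[K] A)
    {h k : H} {ι κ : Type*} (rh : Repr K h ι) (rk : Repr K k κ) :
    cv f g (h ⊗ₜ k) = ∑ i ∈ rh.index, ∑ j ∈ rk.index,
      f (rh.left i ⊗ₜ rk.left j) * g (rh.right i ⊗ₜ rk.right j) := by
  rw [cv_apply_repr f g (tmulRepr K H rh rk), ← Finset.sum_product']
  rfl

/-- The product representation of `comul (a * b)`. -/
def mulRepr {a b : H} {ι κ : Type*} (ra : Repr K a ι) (rb : Repr K b κ) : Repr K (a * b) (ι × κ) where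
  index := ra.index ×ˢ rb.index
  left p := ra.left p.1 * rb.left p.2
  right p := ra.right p.1 * rb.right p.2
  eq := by
    rw [Finset.sum_product, Bialgebra.comul_mul, ← ra.eq, ← rb.eq, Finset.sum_mul_sum]
    refine Finset.sum_congr rfl fun i _ => Finset.sum_congr rfl fun j _ => ?_
    rw [Algebra.TensorProduct.tmul_mul_tmul]

lemma cvSid : cv (sa K H) LinearMap.id = (ce : H →ₗ[K] H) := by
  unfold cv ce
  exact HopfAlgebra.mul_antipode_rTensor_comul

lemma cvidS : cv LinearMap.id (sa K H) = (ce : H →ₗ[K] H) := by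
  unfold cv ce
  exact HopfAlgebra.mul_antipode_lTensor_comul

@[simp] lemma antipode_one : sa K H 1 = 1 := by
  have h := HopfAlgebra.mul_antipode_rTensor_comul_apply (R := K) (a := (1 : H))
  simpa [Algebra.TensorProduct.one_def] using h

lemma ce_scalar : (ce : H →ₗ[K] K) = cu K H := by
  apply LinearMap.ext; intro c
  simp [ce_apply]

lemma cv_i1_i2 : cv (i1 K H) (i2 K H) = cm K H := by
  apply LinearMap.ext; intro c
  rw [cv_apply_repr _ _ (ℛ K c)]
  simp only [i1_apply, i2_apply, Algebra.TensorProduct.tmul_mul_tmul, one_mul, mul_one]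
  exact (ℛ K c).eq

lemma comp_cv_eq {A B : Type} [Ring A] [Algebra K A] [Ring B] [Algebra K B]
    {C : Type} [AddCommGroup C] [Module K C] [Coalgebra K C]
    (φ : A →ₐ[K] B) {f g : C →ₗ[K] A} (h : cv f g = ce) :
    cv (φ.toLinearMap ∘ₗ f) (φ.toLinearMap ∘ₗ g) = ce := by
  rw [← comp_cv, h, comp_ce]

lemma counit_comp_antipode : cu K H ∘ₗ sa K H = cu K H := by
  have h : cv (cu K H ∘ₗ sa K H) (cu K H ∘ₗ LinearMap.id) = ce :=
    comp_cv_eq K (Bialgebra.counitAlgHom K H) (cvSid K H)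
  rw [LinearMap.comp_id] at h
  calc cu K H ∘ₗ sa K H = cv (cu K H ∘ₗ sa K H) ce := (cv_ce_right _).symm
    _ = cv (cu K H ∘ₗ sa K H) (cu K H) := by rw [ce_scalar]
    _ = ce := h
    _ = cu K H := ce_scalar K H

@[simp] lemma counit_antipode (a : H) : cu K H (sa K H a) = cu K H a :=
  LinearMap.congr_fun (counit_comp_antipode K H) a

end Hopf

section Hopf2

variable (K : Type) [Field K] (H : Type) [Ring H] [HopfAlgebra K H]

open YDL

lemma counit2_tmul (h k : H) :
    CoalgebraStruct.counit (R := K) (A := H ⊗[K] H) (h ⊗ₜ k) = cu K H h * cu K H k := by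
  rw [TensorProduct.counit_tmul, smul_eq_mul, mul_comm]

lemma sum_counit_counit {k : H} {ι : Type*} (r : Repr K k ι) :
    ∑ j ∈ r.index, cu K H (r.left j) * cu K H (r.right j) = cu K H k := by
  have h := congrArg (cu K H) (sum_counit_smul r)
  simpa [map_sum, smul_eq_mul] using h

lemma sum_counit_counit' {k : H} {ι : Type*} (r : Repr K k ι) :
    ∑ j ∈ r.index, cu K H (r.right j) * cu K H (r.left j) = cu K H k := by
  rw [← sum_counit_counit K H r]
  exact Finset.sum_congr rfl fun j _ => mul_comm _ _

lemma p1_comul : cm K H ∘ₗ p1 K H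
    = TensorProduct.map (p1 K H) (p1 K H)
        ∘ₗ CoalgebraStruct.comul (R := K) (A := H ⊗[K] H) := by
  apply TensorProduct.ext'; intro h k
  simp only [LinearMap.comp_apply]
  rw [comul2_tmul K H h k (ℛ K h) (ℛ K k)]
  simp only [map_sum, TensorProduct.map_tmul, p1_apply]
  rw [map_smul, ← (ℛ K h).eq, Finset.smul_sum]
  refine Finset.sum_congr rfl fun i _ => ?_
  have hterm : ∀ j ∈ (ℛ K k).index,
      (cu K H ((ℛ K k).left j) • (ℛ K h).left i)
          ⊗ₜ[K] (cu K H ((ℛ K k).right j) • (ℛ K h).right i)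
        = (cu K H ((ℛ K k).right j) * cu K H ((ℛ K k).left j))
            • ((ℛ K h).left i ⊗ₜ[K] (ℛ K h).right i) := by
    intro j _
    rw [TensorProduct.tmul_smul, ← TensorProduct.smul_tmul', smul_smul]
  rw [Finset.sum_congr rfl hterm, ← Finset.sum_smul, sum_counit_counit']

lemma p2_comul : cm K H ∘ₗ p2 K H
    = TensorProduct.map (p2 K H) (p2 K H)
        ∘ₗ CoalgebraStruct.comul (R := K) (A := H ⊗[K] H) := by
  apply TensorProduct.ext'; intro h k
  simp only [LinearMap.comp_apply]
  rw [comul2_tmul K H h k (ℛ K h) (ℛ K k)]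
  simp only [map_sum, TensorProduct.map_tmul, p2_apply]
  rw [map_smul, ← (ℛ K k).eq, Finset.smul_sum, Finset.sum_comm]
  refine Finset.sum_congr rfl fun j _ => ?_
  have hterm : ∀ i ∈ (ℛ K h).index,
      (cu K H ((ℛ K h).left i) • (ℛ K k).left j)
          ⊗ₜ[K] (cu K H ((ℛ K h).right i) • (ℛ K k).right j)
        = (cu K H ((ℛ K h).right i) * cu K H ((ℛ K h).left i))
            • ((ℛ K k).left j ⊗ₜ[K] (ℛ K k).right j) := by
    intro i _
    rw [TensorProduct.tmul_smul, ← TensorProduct.smul_tmul', smul_smul]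
  rw [Finset.sum_congr rfl hterm, ← Finset.sum_smul, sum_counit_counit']

lemma p1_counit : cu K H ∘ₗ p1 K H = CoalgebraStruct.counit (R := K) (A := H ⊗[K] H) := by
  apply TensorProduct.ext'; intro h k
  simp only [LinearMap.comp_apply, p1_apply, map_smul, counit2_tmul, smul_eq_mul]
  exact mul_comm _ _

lemma p2_counit : cu K H ∘ₗ p2 K H = CoalgebraStruct.counit (R := K) (A := H ⊗[K] H) := by
  apply TensorProduct.ext'; intro h k
  simp only [LinearMap.comp_apply, p2_apply, map_smul, counit2_tmul, smul_eq_mul]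

lemma mu_comul : cm K H ∘ₗ mu K H
    = TensorProduct.map (mu K H) (mu K H)
        ∘ₗ CoalgebraStruct.comul (R := K) (A := H ⊗[K] H) := by
  apply TensorProduct.ext'; intro h k
  simp only [LinearMap.comp_apply]
  rw [comul2_tmul K H h k (ℛ K h) (ℛ K k)]
  simp only [map_sum, TensorProduct.map_tmul, LinearMap.mul'_apply]
  rw [Bialgebra.comul_mul, ← (ℛ K h).eq, ← (ℛ K k).eq, Finset.sum_mul_sum]
  refine Finset.sum_congr rfl fun i _ => Finset.sum_congr rfl fun j _ => ?_
  rw [Algebra.TensorProduct.tmul_mul_tmul]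

lemma mu_counit : cu K H ∘ₗ mu K H = CoalgebraStruct.counit (R := K) (A := H ⊗[K] H) := by
  apply TensorProduct.ext'; intro h k
  simp only [LinearMap.comp_apply, LinearMap.mul'_apply, counit2_tmul, Bialgebra.counit_mul]

lemma split12 {B : Type} [Ring B] [Algebra K B] (F G : H →ₗ[K] B) :
    cv (F ∘ₗ p1 K H) (G ∘ₗ p2 K H) = LinearMap.mul' K B ∘ₗ TensorProduct.map F G := by
  apply TensorProduct.ext'; intro h k
  rw [cv_tmul K H _ _ (ℛ K h) (ℛ K k)]
  simp only [LinearMap.comp_apply, p1_apply, p2_apply, map_smul, smul_mul_assoc,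
    mul_smul_comm, TensorProduct.map_tmul, LinearMap.mul'_apply]
  calc ∑ i ∈ (ℛ K h).index, ∑ j ∈ (ℛ K k).index,
        cu K H ((ℛ K h).right i) •
          (cu K H ((ℛ K k).left j) • (F ((ℛ K h).left i) * G ((ℛ K k).right j)))
      = ∑ i ∈ (ℛ K h).index,
          cu K H ((ℛ K h).right i) • (F ((ℛ K h).left i) * G k) := by
        refine Finset.sum_congr rfl fun i _ => ?_
        rw [← Finset.smul_sum]
        congr 1
        calc ∑ j ∈ (ℛ K k).index,
              cu K H ((ℛ K k).left j) • (F ((ℛ K h).left i) * G ((ℛ K k).right j))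
            = ∑ j ∈ (ℛ K k).index,
                F ((ℛ K h).left i) * (cu K H ((ℛ K k).left j) • G ((ℛ K k).right j)) :=
              Finset.sum_congr rfl fun j _ => (mul_smul_comm _ _ _).symm
          _ = F ((ℛ K h).left i) * ∑ j ∈ (ℛ K k).index,
                cu K H ((ℛ K k).left j) • G ((ℛ K k).right j) := by
              rw [Finset.mul_sum]
          _ = F ((ℛ K h).left i) * G k := by rw [sum_counit_smul_map]
    _ = F h * G k := by
        rw [← sum_smul_counit_map (f := F) (ℛ K h), Finset.sum_mul]
        exact Finset.sum_congr rfl fun i _ => (smul_mul_assoc _ _ _).symm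

lemma split21 {B : Type} [Ring B] [Algebra K B] (F G : H →ₗ[K] B) :
    cv (G ∘ₗ p2 K H) (F ∘ₗ p1 K H)
      = LinearMap.mul' K B ∘ₗ TensorProduct.map G F
          ∘ₗ (TensorProduct.comm K H H).toLinearMap := by
  apply TensorProduct.ext'; intro h k
  rw [cv_tmul K H _ _ (ℛ K h) (ℛ K k)]
  simp only [LinearMap.comp_apply, p1_apply, p2_apply, map_smul, smul_mul_assoc,
    mul_smul_comm, TensorProduct.map_tmul, LinearMap.mul'_apply,
    TensorProduct.comm_tmul, LinearEquiv.coe_coe]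
  calc ∑ i ∈ (ℛ K h).index, ∑ j ∈ (ℛ K k).index,
        cu K H ((ℛ K k).right j) •
          (cu K H ((ℛ K h).left i) • (G ((ℛ K k).left j) * F ((ℛ K h).right i)))
      = ∑ i ∈ (ℛ K h).index,
          cu K H ((ℛ K h).left i) • (G k * F ((ℛ K h).right i)) := by
        refine Finset.sum_congr rfl fun i _ => ?_
        calc ∑ j ∈ (ℛ K k).index, cu K H ((ℛ K k).right j) •
              (cu K H ((ℛ K h).left i) • (G ((ℛ K k).left j) * F ((ℛ K h).right i)))
            = cu K H ((ℛ K h).left i) • ∑ j ∈ (ℛ K k).index,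
                cu K H ((ℛ K k).right j) • (G ((ℛ K k).left j) * F ((ℛ K h).right i)) := by
              rw [Finset.smul_sum]
              exact Finset.sum_congr rfl fun j _ => smul_comm _ _ _
          _ = cu K H ((ℛ K h).left i) • ((∑ j ∈ (ℛ K k).index,
                cu K H ((ℛ K k).right j) • G ((ℛ K k).left j)) * F ((ℛ K h).right i)) := by
              rw [Finset.sum_mul]
              congr 1
              exact Finset.sum_congr rfl fun j _ => (smul_mul_assoc _ _ _).symm
          _ = cu K H ((ℛ K h).left i) • (G k * F ((ℛ K h).right i)) := by
              rw [sum_smul_counit_map]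
    _ = G k * F h := by
        rw [← sum_counit_smul_map (f := F) (ℛ K h), Finset.mul_sum]
        exact Finset.sum_congr rfl fun i _ => (mul_smul_comm _ _ _).symm

lemma cv_p1_p2 : cv (p1 K H) (p2 K H) = mu K H := by
  have h := split12 K H (B := H) LinearMap.id LinearMap.id
  simpa using h

end Hopf2

section Hopf3

variable (K : Type) [Field K] (H : Type) [Ring H] [HopfAlgebra K H]

open YDL

lemma cv_i1S_i1 : cv (i1 K H ∘ₗ sa K H) (i1 K H) = ce := by
  have h := comp_cv_eq K
    (Algebra.TensorProduct.includeLeft (R := K) (A := H) (B := H) (S := K)) (cvSid K H)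
  have h2 : (Algebra.TensorProduct.includeLeft (R := K) (A := H) (B := H) (S := K)).toLinearMap
      = i1 K H := rfl
  rwa [h2, LinearMap.comp_id] at h

lemma cv_i1_i1S : cv (i1 K H) (i1 K H ∘ₗ sa K H) = ce := by
  have h := comp_cv_eq K
    (Algebra.TensorProduct.includeLeft (R := K) (A := H) (B := H) (S := K)) (cvidS K H)
  have h2 : (Algebra.TensorProduct.includeLeft (R := K) (A := H) (B := H) (S := K)).toLinearMap
      = i1 K H := rfl
  rwa [h2, LinearMap.comp_id] at h

lemma cv_i2S_i2 : cv (i2 K H ∘ₗ sa K H) (i2 K H) = ce := by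
  have h := comp_cv_eq K
    (Algebra.TensorProduct.includeRight (R := K) (A := H) (B := H)) (cvSid K H)
  have h2 : (Algebra.TensorProduct.includeRight (R := K) (A := H) (B := H)).toLinearMap
      = i2 K H := rfl
  rwa [h2, LinearMap.comp_id] at h

lemma cv_i2_i2S : cv (i2 K H) (i2 K H ∘ₗ sa K H) = ce := by
  have h := comp_cv_eq K
    (Algebra.TensorProduct.includeRight (R := K) (A := H) (B := H)) (cvidS K H)
  have h2 : (Algebra.TensorProduct.includeRight (R := K) (A := H) (B := H)).toLinearMap
      = i2 K H := rfl
  rwa [h2, LinearMap.comp_id] at h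

lemma cm_sa : cm K H ∘ₗ sa K H = cv (i2 K H ∘ₗ sa K H) (i1 K H ∘ₗ sa K H) := by
  apply cv_cancel (g := cm K H)
  · have h := comp_cv_eq K (Bialgebra.comulAlgHom K H) (cvSid K H)
    have h2 : (Bialgebra.comulAlgHom K H).toLinearMap = cm K H := rfl
    rwa [h2, LinearMap.comp_id] at h
  · rw [← cv_i1_i2, cv_assoc,
      show cv (i2 K H) (cv (i2 K H ∘ₗ sa K H) (i1 K H ∘ₗ sa K H))
        = cv (cv (i2 K H) (i2 K H ∘ₗ sa K H)) (i1 K H ∘ₗ sa K H) from (cv_assoc _ _ _).symm,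
      cv_i2_i2S, cv_ce_left, cv_i1_i1S]

lemma cv_p2_saP2 : cv (p2 K H) (sa K H ∘ₗ p2 K H) = ce := by
  have h := cv_comp (ψ := p2 K H) (p2_comul K H) LinearMap.id (sa K H)
  rw [cvidS, LinearMap.id_comp] at h
  rw [← h]
  exact ce_comp _ (p2_counit K H)

lemma cv_p1_saP1 : cv (p1 K H) (sa K H ∘ₗ p1 K H) = ce := by
  have h := cv_comp (ψ := p1 K H) (p1_comul K H) LinearMap.id (sa K H)
  rw [cvidS, LinearMap.id_comp] at h
  rw [← h]
  exact ce_comp _ (p1_counit K H)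

lemma cv_saP2_p2 : cv (sa K H ∘ₗ p2 K H) (p2 K H) = ce := by
  have h := cv_comp (ψ := p2 K H) (p2_comul K H) (sa K H) LinearMap.id
  rw [cvSid, LinearMap.id_comp] at h
  rw [← h]
  exact ce_comp _ (p2_counit K H)

lemma cv_saP1_p1 : cv (sa K H ∘ₗ p1 K H) (p1 K H) = ce := by
  have h := cv_comp (ψ := p1 K H) (p1_comul K H) (sa K H) LinearMap.id
  rw [cvSid, LinearMap.id_comp] at h
  rw [← h]
  exact ce_comp _ (p1_counit K H)

lemma sa_mu : sa K H ∘ₗ mu K H = cv (sa K H ∘ₗ p2 K H) (sa K H ∘ₗ p1 K H) := by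
  apply cv_cancel (g := mu K H)
  · have h := cv_comp (ψ := mu K H) (mu_comul K H) (sa K H) LinearMap.id
    rw [cvSid, LinearMap.id_comp] at h
    rw [← h]
    exact ce_comp _ (mu_counit K H)
  · rw [← cv_p1_p2, cv_assoc,
      show cv (p2 K H) (cv (sa K H ∘ₗ p2 K H) (sa K H ∘ₗ p1 K H))
        = cv (cv (p2 K H) (sa K H ∘ₗ p2 K H)) (sa K H ∘ₗ p1 K H) from (cv_assoc _ _ _).symm,
      cv_p2_saP2, cv_ce_left, cv_p1_saP1]

lemma antipode_mul (a b : H) : sa K H (a * b) = sa K H b * sa K H a := by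
  have h := sa_mu K H
  rw [split21] at h
  have h2 := LinearMap.congr_fun h (a ⊗ₜ[K] b)
  simpa using h2

end Hopf3

section Hopf4

variable (K : Type) [Field K] (H : Type) [Ring H] [HopfAlgebra K H]

open YDL

lemma ad_tmul (h x : H) {ι : Type*} (r : Repr K h ι) :
    YDL.ad K H (h ⊗ₜ x) = ∑ i ∈ r.index, r.left i * (x * sa K H (r.right i)) := by
  simp only [YDL.ad, LinearMap.comp_apply, LinearMap.rTensor_tmul]
  rw [show (cm K H) h = ∑ i ∈ r.index, r.left i ⊗ₜ[K] r.right i from r.eq.symm,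
    TensorProduct.sum_tmul]
  simp only [map_sum, LinearEquiv.coe_coe, TensorProduct.assoc_tmul,
    LinearMap.lTensor_tmul, LinearMap.comp_apply, TensorProduct.comm_tmul,
    LinearMap.mul'_apply]

lemma c2_repr (l : H) {ι κ : Type*} (r : Repr K l ι) (r2 : ∀ i, Repr K (r.left i) κ) :
    YDL.c2 K H l = ∑ i ∈ r.index, ∑ j ∈ (r2 i).index,
      (r2 i).right j ⊗ₜ[K] (sa K H ((r2 i).left j) * r.right i) := by
  simp only [YDL.c2, LinearMap.comp_apply]
  rw [show (cm K H) l = ∑ i ∈ r.index, r.left i ⊗ₜ[K] r.right i from r.eq.symm]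
  simp only [map_sum, LinearMap.rTensor_tmul]
  refine Finset.sum_congr rfl fun i _ => ?_
  rw [show (cm K H) (r.left i) = ∑ j ∈ (r2 i).index, (r2 i).left j ⊗ₜ[K] (r2 i).right j from
    (r2 i).eq.symm]
  simp only [map_sum, TensorProduct.sum_tmul, LinearMap.rTensor_tmul, LinearEquiv.coe_coe,
    TensorProduct.comm_tmul, TensorProduct.assoc_tmul, LinearMap.lTensor_tmul,
    LinearMap.mul'_apply]

end Hopf4

section Hopf5

variable (K : Type) [Field K] (H : Type) [Ring H] [HopfAlgebra K H]

open YDL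

lemma ad_eq : YDL.ad K H = cv (mu K H) (sa K H ∘ₗ p1 K H) := by
  apply TensorProduct.ext'; intro h x
  rw [ad_tmul K H h x (ℛ K h), cv_tmul K H _ _ (ℛ K h) (ℛ K x)]
  refine Finset.sum_congr rfl fun i _ => ?_
  have hc := sum_smul_counit_map (K := K)
    (f := LinearMap.mulRight K (sa K H ((ℛ K h).right i))
      ∘ₗ LinearMap.mulLeft K ((ℛ K h).left i)) (ℛ K x)
  simp only [LinearMap.comp_apply, LinearMap.mulRight_apply, LinearMap.mulLeft_apply] at hc
  rw [← mul_assoc, ← hc]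
  refine Finset.sum_congr rfl fun j _ => ?_
  simp only [LinearMap.mul'_apply, LinearMap.comp_apply, p1_apply, map_smul,
    mul_smul_comm, mul_assoc]

lemma c2_eq : YDL.c2 K H = cv (cv (i2 K H ∘ₗ sa K H) (i1 K H)) (i2 K H) := by
  apply LinearMap.ext; intro l
  rw [c2_repr K H l (ℛ K l) (fun i => ℛ K ((ℛ K l).left i))]
  symm
  rw [cv_apply_repr _ _ (ℛ K l)]
  refine Finset.sum_congr rfl fun i _ => ?_
  rw [cv_apply_repr _ _ (ℛ K ((ℛ K l).left i)), Finset.sum_mul]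
  refine Finset.sum_congr rfl fun j _ => ?_
  simp only [LinearMap.comp_apply, i1_apply, i2_apply,
    Algebra.TensorProduct.tmul_mul_tmul, one_mul, mul_one]

lemma cv_tail_i2 {B : Type} [Ring B] [Algebra K B] (Φ : H ⊗[K] H →ₗ[K] B) (ψ : H →ₗ[K] B)
    (hmul : ∀ (z : H ⊗[K] H) (y : H), Φ (z * (1 ⊗ₜ y)) = Φ z * ψ y)
    (X : H →ₗ[K] H ⊗[K] H) : Φ ∘ₗ cv X (i2 K H) = cv (Φ ∘ₗ X) ψ := by
  apply LinearMap.ext; intro c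
  simp only [LinearMap.comp_apply, cv_apply_repr X (i2 K H) (ℛ K c),
    cv_apply_repr (Φ ∘ₗ X) ψ (ℛ K c), map_sum]
  refine Finset.sum_congr rfl fun i _ => ?_
  rw [i2_apply, hmul]

lemma cv_head21 {B : Type} [Ring B] [Algebra K B] (Φ : H ⊗[K] H →ₗ[K] B)
    (f : H →ₗ[K] H) (ψ χ : H →ₗ[K] B)
    (hterm : ∀ x y : H, Φ (x ⊗ₜ f y) = ψ y * χ x) :
    Φ ∘ₗ cv (i2 K H ∘ₗ f) (i1 K H) = cv ψ χ := by
  apply LinearMap.ext; intro c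
  simp only [LinearMap.comp_apply, cv_apply_repr (i2 K H ∘ₗ f) (i1 K H) (ℛ K c),
    cv_apply_repr ψ χ (ℛ K c), map_sum]
  refine Finset.sum_congr rfl fun i _ => ?_
  rw [show (i2 K H) (f ((ℛ K c).left i)) * (i1 K H) ((ℛ K c).right i)
      = (ℛ K c).right i ⊗ₜ[K] f ((ℛ K c).left i) from by
    simp [Algebra.TensorProduct.tmul_mul_tmul], hterm]

end Hopf5

section Red23

variable (K : Type) [Field K] (H : Type) [Ring H] [HopfAlgebra K H]

open YDL

lemma red_yd23 : cv (cm K H ∘ₗ YDL.ad K H) (i1 K H ∘ₗ p1 K H)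
    = cv (i1 K H ∘ₗ mu K H) (i2 K H ∘ₗ YDL.ad K H) := by
  have hIR : (Algebra.TensorProduct.includeRight (R := K) (A := H) (B := H)).toLinearMap
      = i2 K H := rfl
  have hCM : (Bialgebra.comulAlgHom K H).toLinearMap = cm K H := rfl
  have h1 : cm K H ∘ₗ mu K H = cv (i1 K H ∘ₗ mu K H) (i2 K H ∘ₗ mu K H) := by
    rw [← cv_i1_i2]
    exact cv_comp (mu K H) (mu_comul K H) _ _
  have h2 : cm K H ∘ₗ sa K H ∘ₗ p1 K H
      = cv (i2 K H ∘ₗ sa K H ∘ₗ p1 K H) (i1 K H ∘ₗ sa K H ∘ₗ p1 K H) := by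
    rw [← LinearMap.comp_assoc, cm_sa, cv_comp (p1 K H) (p1_comul K H),
      LinearMap.comp_assoc, LinearMap.comp_assoc]
  have h3 : cm K H ∘ₗ YDL.ad K H
      = cv (cv (i1 K H ∘ₗ mu K H) (i2 K H ∘ₗ mu K H))
          (cv (i2 K H ∘ₗ sa K H ∘ₗ p1 K H) (i1 K H ∘ₗ sa K H ∘ₗ p1 K H)) := by
    rw [ad_eq]
    have hc := comp_cv (Bialgebra.comulAlgHom K H) (mu K H) (sa K H ∘ₗ p1 K H)
    rw [hCM] at hc
    rw [hc, h1, h2]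
  have h4 : i2 K H ∘ₗ YDL.ad K H
      = cv (i2 K H ∘ₗ mu K H) (i2 K H ∘ₗ sa K H ∘ₗ p1 K H) := by
    rw [ad_eq]
    have hc := comp_cv (Algebra.TensorProduct.includeRight (R := K) (A := H) (B := H))
      (mu K H) (sa K H ∘ₗ p1 K H)
    rw [hIR] at hc
    rw [hc]
  have htail : cv (i1 K H ∘ₗ sa K H ∘ₗ p1 K H) (i1 K H ∘ₗ p1 K H) = ce := by
    have hc := cv_comp (p1 K H) (p1_comul K H) (i1 K H ∘ₗ sa K H) (i1 K H)
    rw [cv_i1S_i1] at hc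
    rw [← LinearMap.comp_assoc, ← hc]
    exact ce_comp _ (p1_counit K H)
  rw [h3, h4]
  simp only [cv_assoc]
  rw [htail, cv_ce_right]

end Red23

section Red25

variable (K : Type) [Field K] (H : Type) [Ring H] [HopfAlgebra K H]

open YDL

lemma i1i2_swap : cv (i1 K H ∘ₗ p2 K H) (i2 K H ∘ₗ p1 K H)
    = cv (i2 K H ∘ₗ p1 K H) (i1 K H ∘ₗ p2 K H) := by
  rw [split21 K H (i2 K H) (i1 K H), split12 K H (i2 K H) (i1 K H)]
  apply TensorProduct.ext'; intro h k
  simp [Algebra.TensorProduct.tmul_mul_tmul]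

lemma red_yd25 : cv (i2 K H ∘ₗ p2 K H) (YDL.c2 K H ∘ₗ mu K H)
    = cv (YDL.c2 K H ∘ₗ p1 K H) (cm K H ∘ₗ p2 K H) := by
  have hIR : (Algebra.TensorProduct.includeRight (R := K) (A := H) (B := H)).toLinearMap
      = i2 K H := rfl
  have hIL : (Algebra.TensorProduct.includeLeft (R := K) (A := H) (B := H) (S := K)).toLinearMap
      = i1 K H := rfl
  have hi2mu : i2 K H ∘ₗ mu K H = cv (i2 K H ∘ₗ p1 K H) (i2 K H ∘ₗ p2 K H) := by
    rw [← cv_p1_p2]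
    have hc := comp_cv (Algebra.TensorProduct.includeRight (R := K) (A := H) (B := H))
      (p1 K H) (p2 K H)
    rw [hIR] at hc
    exact hc
  have hi1mu : i1 K H ∘ₗ mu K H = cv (i1 K H ∘ₗ p1 K H) (i1 K H ∘ₗ p2 K H) := by
    rw [← cv_p1_p2]
    have hc := comp_cv (Algebra.TensorProduct.includeLeft (R := K) (A := H) (B := H) (S := K))
      (p1 K H) (p2 K H)
    rw [hIL] at hc
    exact hc
  have hi2samu : i2 K H ∘ₗ sa K H ∘ₗ mu K H
      = cv (i2 K H ∘ₗ sa K H ∘ₗ p2 K H) (i2 K H ∘ₗ sa K H ∘ₗ p1 K H) := by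
    rw [show i2 K H ∘ₗ sa K H ∘ₗ mu K H = i2 K H ∘ₗ (sa K H ∘ₗ mu K H) from rfl, sa_mu]
    have hc := comp_cv (Algebra.TensorProduct.includeRight (R := K) (A := H) (B := H))
      (sa K H ∘ₗ p2 K H) (sa K H ∘ₗ p1 K H)
    rw [hIR] at hc
    exact hc
  have hc2mu : YDL.c2 K H ∘ₗ mu K H
      = cv (cv (cv (i2 K H ∘ₗ sa K H ∘ₗ p2 K H) (i2 K H ∘ₗ sa K H ∘ₗ p1 K H))
          (cv (i1 K H ∘ₗ p1 K H) (i1 K H ∘ₗ p2 K H)))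
          (cv (i2 K H ∘ₗ p1 K H) (i2 K H ∘ₗ p2 K H)) := by
    rw [c2_eq, cv_comp (mu K H) (mu_comul K H), cv_comp (mu K H) (mu_comul K H),
      LinearMap.comp_assoc, hi2samu, hi1mu, hi2mu]
  have hc2p1 : YDL.c2 K H ∘ₗ p1 K H
      = cv (cv (i2 K H ∘ₗ sa K H ∘ₗ p1 K H) (i1 K H ∘ₗ p1 K H)) (i2 K H ∘ₗ p1 K H) := by
    rw [c2_eq, cv_comp (p1 K H) (p1_comul K H), cv_comp (p1 K H) (p1_comul K H),
      LinearMap.comp_assoc]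
  have hcmp2 : cm K H ∘ₗ p2 K H = cv (i1 K H ∘ₗ p2 K H) (i2 K H ∘ₗ p2 K H) := by
    rw [← cv_i1_i2, cv_comp (p2 K H) (p2_comul K H)]
  have hhead : cv (i2 K H ∘ₗ p2 K H) (i2 K H ∘ₗ sa K H ∘ₗ p2 K H) = ce := by
    have hc := cv_comp (p2 K H) (p2_comul K H) (i2 K H) (i2 K H ∘ₗ sa K H)
    rw [cv_i2_i2S] at hc
    rw [show i2 K H ∘ₗ sa K H ∘ₗ p2 K H = (i2 K H ∘ₗ sa K H) ∘ₗ p2 K H from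
      (LinearMap.comp_assoc _ _ _).symm, ← hc]
    exact ce_comp _ (p2_counit K H)
  rw [hc2mu, hc2p1, hcmp2]
  simp only [cv_assoc]
  rw [← cv_assoc, hhead, cv_ce_left, cv_swap_inner (i1i2_swap K H)]

end Red25

section RedRC

variable (K : Type) [Field K] (H : Type) [Ring H] [HopfAlgebra K H]

open YDL Algebra.TensorProduct

lemma red_rcoassoc :
    (TensorProduct.assoc K H H H).toLinearMap ∘ₗ (YDL.c2 K H).rTensor H ∘ₗ YDL.c2 K H
      = (cm K H).lTensor H ∘ₗ YDL.c2 K H := by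
  -- algebra homs
  set ALa := (Algebra.TensorProduct.assoc (R := K) (S := K) (A := H) K H H).toAlgHom with hALa
  set ILa := (Algebra.TensorProduct.includeLeft (R := K) (A := H ⊗[K] H) (B := H) (S := K))
    with hILa
  set IRa := (Algebra.TensorProduct.includeRight (R := K) (A := H ⊗[K] H) (B := H)) with hIRa
  set jRa := (Algebra.TensorProduct.includeRight (R := K) (A := H) (B := H ⊗[K] H)) with hjRa
  set jLa := (Algebra.TensorProduct.includeLeft (R := K) (A := H) (B := H ⊗[K] H) (S := K))
    with hjLa
  have hAL : ALa.toLinearMap = (TensorProduct.assoc K H H H).toLinearMap := rfl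
  -- LHS step 1 : (c2.rTensor) ∘ c2
  have hmul1 : ∀ (z : H ⊗[K] H) (y : H),
      (YDL.c2 K H).rTensor H (z * (1 ⊗ₜ y))
        = (YDL.c2 K H).rTensor H z * IRa.toLinearMap y := by
    intro z y
    induction z using TensorProduct.induction_on with
    | zero => simp
    | tmul u v =>
        simp [hILa, hIRa, hjRa, hjLa, Algebra.TensorProduct.includeRight_apply,
          Algebra.TensorProduct.includeLeft_apply, AlgHom.toLinearMap_apply,
          Algebra.TensorProduct.tmul_mul_tmul]
    | add z₁ z₂ h₁ h₂ => simp [add_mul, h₁, h₂]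
  have hL1 : (YDL.c2 K H).rTensor H ∘ₗ YDL.c2 K H
      = cv ((YDL.c2 K H).rTensor H ∘ₗ cv (i2 K H ∘ₗ sa K H) (i1 K H)) IRa.toLinearMap := by
    have h := cv_tail_i2 K H ((YDL.c2 K H).rTensor H) IRa.toLinearMap hmul1
      (cv (i2 K H ∘ₗ sa K H) (i1 K H))
    rwa [← c2_eq] at h
  -- LHS step 2
  have hterm2 : ∀ x y : H,
      (YDL.c2 K H).rTensor H (x ⊗ₜ sa K H y)
        = (IRa.toLinearMap ∘ₗ sa K H) y * (ILa.toLinearMap ∘ₗ YDL.c2 K H) x := by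
    intro x y
    simp [hILa, hIRa, hjRa, hjLa, Algebra.TensorProduct.includeRight_apply,
          Algebra.TensorProduct.includeLeft_apply, AlgHom.toLinearMap_apply,
          Algebra.TensorProduct.tmul_mul_tmul]
  have hL2 : (YDL.c2 K H).rTensor H ∘ₗ cv (i2 K H ∘ₗ sa K H) (i1 K H)
      = cv (IRa.toLinearMap ∘ₗ sa K H) (ILa.toLinearMap ∘ₗ YDL.c2 K H) :=
    cv_head21 K H _ _ _ _ hterm2
  -- expand ILa ∘ c2
  have hL3 : ILa.toLinearMap ∘ₗ YDL.c2 K H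
      = cv (cv (ILa.toLinearMap ∘ₗ (i2 K H ∘ₗ sa K H)) (ILa.toLinearMap ∘ₗ i1 K H))
          (ILa.toLinearMap ∘ₗ i2 K H) := by
    rw [c2_eq, comp_cv, comp_cv]
  -- RHS step 1
  have hmul1' : ∀ (z : H ⊗[K] H) (y : H),
      (cm K H).lTensor H (z * (1 ⊗ₜ y))
        = (cm K H).lTensor H z * (jRa.toLinearMap ∘ₗ cm K H) y := by
    intro z y
    induction z using TensorProduct.induction_on with
    | zero => simp
    | tmul u v =>
        simp [hILa, hIRa, hjRa, hjLa, Algebra.TensorProduct.includeRight_apply,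
          Algebra.TensorProduct.includeLeft_apply, AlgHom.toLinearMap_apply,
          Algebra.TensorProduct.tmul_mul_tmul]
    | add z₁ z₂ h₁ h₂ => simp [add_mul, h₁, h₂]
  have hR1 : (cm K H).lTensor H ∘ₗ YDL.c2 K H
      = cv ((cm K H).lTensor H ∘ₗ cv (i2 K H ∘ₗ sa K H) (i1 K H))
          (jRa.toLinearMap ∘ₗ cm K H) := by
    have h := cv_tail_i2 K H ((cm K H).lTensor H) (jRa.toLinearMap ∘ₗ cm K H) hmul1'
      (cv (i2 K H ∘ₗ sa K H) (i1 K H))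
    rwa [← c2_eq] at h
  -- RHS step 2
  have hterm2' : ∀ x y : H,
      (cm K H).lTensor H (x ⊗ₜ sa K H y)
        = (jRa.toLinearMap ∘ₗ (cm K H ∘ₗ sa K H)) y * jLa.toLinearMap x := by
    intro x y
    simp [hILa, hIRa, hjRa, hjLa, Algebra.TensorProduct.includeRight_apply,
          Algebra.TensorProduct.includeLeft_apply, AlgHom.toLinearMap_apply,
          Algebra.TensorProduct.tmul_mul_tmul]
  have hR2 : (cm K H).lTensor H ∘ₗ cv (i2 K H ∘ₗ sa K H) (i1 K H)
      = cv (jRa.toLinearMap ∘ₗ (cm K H ∘ₗ sa K H)) jLa.toLinearMap :=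
    cv_head21 K H _ _ _ _ hterm2'
  -- expand RHS letters
  have hR3 : jRa.toLinearMap ∘ₗ (cm K H ∘ₗ sa K H)
      = cv (jRa.toLinearMap ∘ₗ (i2 K H ∘ₗ sa K H)) (jRa.toLinearMap ∘ₗ (i1 K H ∘ₗ sa K H)) := by
    rw [cm_sa, comp_cv]
  have hR4 : jRa.toLinearMap ∘ₗ cm K H
      = cv (jRa.toLinearMap ∘ₗ i1 K H) (jRa.toLinearMap ∘ₗ i2 K H) := by
    rw [← cv_i1_i2, comp_cv]
  -- letter identifications
  have e1 : ALa.toLinearMap ∘ₗ (IRa.toLinearMap ∘ₗ sa K H)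
      = jRa.toLinearMap ∘ₗ (i2 K H ∘ₗ sa K H) := by
    apply LinearMap.ext; intro y
    simp [hALa, hIRa, hjRa, Algebra.TensorProduct.one_def]
  have e2 : ALa.toLinearMap ∘ₗ (ILa.toLinearMap ∘ₗ (i2 K H ∘ₗ sa K H))
      = jRa.toLinearMap ∘ₗ (i1 K H ∘ₗ sa K H) := by
    apply LinearMap.ext; intro y
    simp [hALa, hILa, hjRa, Algebra.TensorProduct.one_def]
  have e3 : ALa.toLinearMap ∘ₗ (ILa.toLinearMap ∘ₗ i1 K H) = jLa.toLinearMap := by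
    apply LinearMap.ext; intro y
    simp [hALa, hILa, hjLa, Algebra.TensorProduct.one_def]
  have e4 : ALa.toLinearMap ∘ₗ (ILa.toLinearMap ∘ₗ i2 K H)
      = jRa.toLinearMap ∘ₗ i1 K H := by
    apply LinearMap.ext; intro y
    simp [hALa, hILa, hjRa, Algebra.TensorProduct.one_def]
  have e5 : ALa.toLinearMap ∘ₗ IRa.toLinearMap = jRa.toLinearMap ∘ₗ i2 K H := by
    apply LinearMap.ext; intro y
    simp [hALa, hIRa, hjRa, Algebra.TensorProduct.one_def]
  -- assemble
  rw [hL1, hL2, hL3, hR1, hR2, hR3, hR4, ← hAL, comp_cv, comp_cv, comp_cv, comp_cv,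
    e1, e2, e3, e4, e5]
  simp only [cv_assoc]

end RedRC

section Plumb

variable (K : Type) [Field K] (H : Type) [Ring H] [HopfAlgebra K H]

open YDL

/-- `u ⊗ v ↦ u ⊗ (v ⊗ l)`. -/
def thetaL (l : H) : H ⊗[K] H →ₗ[K] H ⊗[K] (H ⊗[K] H) :=
  (TensorProduct.assoc K H H H).toLinearMap ∘ₗ ((TensorProduct.mk K (H ⊗[K] H) H).flip l)

/-- `u ⊗ v ↦ (k ⊗ u) ⊗ v`. -/
def thetaR (k : H) : H ⊗[K] H →ₗ[K] (H ⊗[K] H) ⊗[K] H :=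
  (TensorProduct.assoc K H H H).symm.toLinearMap ∘ₗ TensorProduct.mk K H (H ⊗[K] H) k

@[simp] lemma thetaL_tmul (l u v : H) : thetaL K H l (u ⊗ₜ v) = u ⊗ₜ (v ⊗ₜ l) := rfl

@[simp] lemma thetaR_tmul (k u v : H) : thetaR K H k (u ⊗ₜ v) = (k ⊗ₜ u) ⊗ₜ v := by
  simp [thetaR]

@[simp] lemma lactB_tmul (h k l : H) :
    YDL.lactB K H (h ⊗ₜ (k ⊗ₜ l)) = YDL.ad K H (h ⊗ₜ k) ⊗ₜ l := by
  simp [YDL.lactB]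

@[simp] lemma ractB_tmul (k l h : H) :
    YDL.ractB K H ((k ⊗ₜ l) ⊗ₜ h) = k ⊗ₜ (l * h) := by
  simp [YDL.ractB]

lemma lcoactB_tmul (k l : H) :
    YDL.lcoactB K H (k ⊗ₜ l) = thetaL K H l (cm K H k) := by
  simp [YDL.lcoactB, thetaL]

lemma rcoactB_tmul (k l : H) :
    YDL.rcoactB K H (k ⊗ₜ l)
      = (TensorProduct.assoc K H H H).symm (k ⊗ₜ YDL.c2 K H l) := by
  simp [YDL.rcoactB]

lemma lcoactB_repr (k l : H) {ι : Type*} (r : Repr K k ι) :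
    YDL.lcoactB K H (k ⊗ₜ l) = ∑ i ∈ r.index, r.left i ⊗ₜ (r.right i ⊗ₜ[K] l) := by
  rw [lcoactB_tmul, ← r.eq, map_sum]
  simp

/-- representation of `comul 1`. -/
def oneRepr : Repr K (1 : H) Unit where
  index := (Finset.univ : Finset Unit)
  left _ := 1
  right _ := 1
  eq := by simp [Algebra.TensorProduct.one_def]

lemma ad_one (k : H) : YDL.ad K H (1 ⊗ₜ k) = k := by
  rw [ad_tmul K H 1 k (oneRepr K H)]
  simp [oneRepr]

lemma ad_mul' (g h x : H) :
    YDL.ad K H ((g * h) ⊗ₜ x) = YDL.ad K H (g ⊗ₜ YDL.ad K H (h ⊗ₜ x)) := by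
  rw [ad_tmul K H (g * h) x (mulRepr K H (ℛ K g) (ℛ K h)),
    ad_tmul K H g _ (ℛ K g)]
  have hstep : (∑ p ∈ (mulRepr K H (ℛ K g) (ℛ K h)).index,
        (mulRepr K H (ℛ K g) (ℛ K h)).left p
          * (x * sa K H ((mulRepr K H (ℛ K g) (ℛ K h)).right p)))
      = ∑ p ∈ (ℛ K g).index ×ˢ (ℛ K h).index,
        ((ℛ K g).left p.1 * (ℛ K h).left p.2)
          * (x * sa K H ((ℛ K g).right p.1 * (ℛ K h).right p.2)) := rfl
  rw [hstep, Finset.sum_product]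
  refine Finset.sum_congr rfl fun i _ => ?_
  rw [ad_tmul K H h x (ℛ K h), Finset.sum_mul, Finset.mul_sum]
  refine Finset.sum_congr rfl fun j _ => ?_
  rw [antipode_mul]
  simp only [mul_assoc]

lemma B_lact_one : ∀ m : H ⊗[K] H, YDL.lactB K H (1 ⊗ₜ m) = m := by
  intro m
  induction m using TensorProduct.induction_on with
  | zero => simp
  | tmul k l => rw [lactB_tmul, ad_one]
  | add m₁ m₂ h₁ h₂ => rw [TensorProduct.tmul_add, map_add, h₁, h₂]

lemma B_lact_mul : ∀ (g h : H) (m : H ⊗[K] H),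
    YDL.lactB K H ((g * h) ⊗ₜ m) = YDL.lactB K H (g ⊗ₜ YDL.lactB K H (h ⊗ₜ m)) := by
  intro g h m
  induction m using TensorProduct.induction_on with
  | zero => simp
  | tmul k l => rw [lactB_tmul, lactB_tmul, lactB_tmul, ad_mul']
  | add m₁ m₂ h₁ h₂ =>
      simp only [TensorProduct.tmul_add, map_add, h₁, h₂]

lemma B_ract_one : ∀ m : H ⊗[K] H, YDL.ractB K H (m ⊗ₜ 1) = m := by
  intro m
  induction m using TensorProduct.induction_on with
  | zero => simp
  | tmul k l => rw [ractB_tmul, mul_one]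
  | add m₁ m₂ h₁ h₂ => rw [TensorProduct.add_tmul, map_add, h₁, h₂]

lemma B_ract_mul : ∀ (m : H ⊗[K] H) (g h : H),
    YDL.ractB K H (m ⊗ₜ (g * h)) = YDL.ractB K H (YDL.ractB K H (m ⊗ₜ g) ⊗ₜ h) := by
  intro m g h
  induction m using TensorProduct.induction_on with
  | zero => simp
  | tmul k l => rw [ractB_tmul, ractB_tmul, ractB_tmul, mul_assoc]
  | add m₁ m₂ h₁ h₂ =>
      simp only [TensorProduct.add_tmul, map_add, h₁, h₂]

lemma B_bimod : ∀ (h : H) (m : H ⊗[K] H) (g : H),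
    YDL.ractB K H (YDL.lactB K H (h ⊗ₜ m) ⊗ₜ g)
      = YDL.lactB K H (h ⊗ₜ YDL.ractB K H (m ⊗ₜ g)) := by
  intro h m g
  induction m using TensorProduct.induction_on with
  | zero => simp
  | tmul k l => rw [lactB_tmul, ractB_tmul, ractB_tmul, lactB_tmul]
  | add m₁ m₂ h₁ h₂ =>
      simp only [TensorProduct.tmul_add, TensorProduct.add_tmul, map_add, h₁, h₂]

end Plumb

section RedRCu

variable (K : Type) [Field K] (H : Type) [Ring H] [HopfAlgebra K H]

open YDL

lemma red_rcounit :
    (TensorProduct.rid K H).toLinearMap ∘ₗ (cu K H).lTensor H ∘ₗ YDL.c2 K H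
      = LinearMap.id := by
  apply LinearMap.ext; intro l
  simp only [LinearMap.comp_apply, LinearMap.id_apply]
  rw [c2_repr K H l (ℛ K l) (fun i => ℛ K ((ℛ K l).left i))]
  simp only [map_sum, LinearMap.lTensor_tmul, LinearEquiv.coe_coe, TensorProduct.rid_tmul,
    Bialgebra.counit_mul, counit_antipode, mul_smul]
  have hin : ∀ i ∈ (ℛ K l).index,
      (∑ j ∈ (ℛ K ((ℛ K l).left i)).index,
        cu K H ((ℛ K ((ℛ K l).left i)).left j) •
          cu K H ((ℛ K l).right i) • (ℛ K ((ℛ K l).left i)).right j)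
      = Coalgebra.counit (R := K) ((ℛ K l).right i) • (ℛ K l).left i := by
    intro i _
    calc ∑ j ∈ (ℛ K ((ℛ K l).left i)).index,
          cu K H ((ℛ K ((ℛ K l).left i)).left j) •
            cu K H ((ℛ K l).right i) • (ℛ K ((ℛ K l).left i)).right j
        = cu K H ((ℛ K l).right i) • ∑ j ∈ (ℛ K ((ℛ K l).left i)).index,
            cu K H ((ℛ K ((ℛ K l).left i)).left j) • (ℛ K ((ℛ K l).left i)).right j := by
          rw [Finset.smul_sum]
          exact Finset.sum_congr rfl fun j _ => smul_comm _ _ _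
      _ = _ := by rw [sum_counit_smul]
  rw [Finset.sum_congr rfl hin, sum_smul_counit]

end RedRCu

section Plumb2

variable (K : Type) [Field K] (H : Type) [Ring H] [HopfAlgebra K H]

open YDL

lemma B_lcoassoc :
    (TensorProduct.assoc K H H (H ⊗[K] H)).toLinearMap
        ∘ₗ (cm K H).rTensor (H ⊗[K] H) ∘ₗ YDL.lcoactB K H
      = (YDL.lcoactB K H).lTensor H ∘ₗ YDL.lcoactB K H := by
  apply TensorProduct.ext'; intro k l
  simp only [LinearMap.comp_apply]
  have key := Coalgebra.sum_tmul_tmul_eq (R := K) (ℛ K k)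
    (fun i => ℛ K ((ℛ K k).left i)) (fun i => ℛ K ((ℛ K k).right i))
  have key2 := congrArg
    (LinearMap.lTensor H (LinearMap.lTensor H ((TensorProduct.mk K H H).flip l))) key
  simp only [map_sum, LinearMap.lTensor_tmul, LinearMap.flip_apply,
    TensorProduct.mk_apply] at key2
  calc (TensorProduct.assoc K H H (H ⊗[K] H)).toLinearMap
        ((cm K H).rTensor (H ⊗[K] H) (YDL.lcoactB K H (k ⊗ₜ l)))
      = ∑ i ∈ (ℛ K k).index, ∑ j ∈ (ℛ K ((ℛ K k).left i)).index,
          (ℛ K ((ℛ K k).left i)).left j ⊗ₜ ((ℛ K ((ℛ K k).left i)).right j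
            ⊗ₜ ((ℛ K k).right i ⊗ₜ[K] l)) := by
        rw [lcoactB_repr K H k l (ℛ K k), map_sum, map_sum]
        refine Finset.sum_congr rfl fun i _ => ?_
        rw [LinearMap.rTensor_tmul,
          show (cm K H) ((ℛ K k).left i) = ∑ j ∈ (ℛ K ((ℛ K k).left i)).index,
            (ℛ K ((ℛ K k).left i)).left j ⊗ₜ[K] (ℛ K ((ℛ K k).left i)).right j from
            (ℛ K ((ℛ K k).left i)).eq.symm,
          TensorProduct.sum_tmul, map_sum]
        simp
    _ = ∑ i ∈ (ℛ K k).index, ∑ j ∈ (ℛ K ((ℛ K k).right i)).index,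
          (ℛ K k).left i ⊗ₜ ((ℛ K ((ℛ K k).right i)).left j
            ⊗ₜ ((ℛ K ((ℛ K k).right i)).right j ⊗ₜ[K] l)) := key2
    _ = (YDL.lcoactB K H).lTensor H (YDL.lcoactB K H (k ⊗ₜ l)) := by
        rw [lcoactB_repr K H k l (ℛ K k), map_sum]
        refine Finset.sum_congr rfl fun i _ => ?_
        rw [LinearMap.lTensor_tmul, lcoactB_repr K H _ l (ℛ K ((ℛ K k).right i)),
          TensorProduct.tmul_sum]

lemma B_lcounit :
    (TensorProduct.lid K (H ⊗[K] H)).toLinearMap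
        ∘ₗ (cu K H).rTensor (H ⊗[K] H) ∘ₗ YDL.lcoactB K H = LinearMap.id := by
  apply TensorProduct.ext'; intro k l
  simp only [LinearMap.comp_apply, LinearMap.id_apply]
  rw [lcoactB_repr K H k l (ℛ K k)]
  simp only [map_sum, LinearMap.rTensor_tmul, LinearEquiv.coe_coe, TensorProduct.lid_tmul]
  exact sum_counit_smul_map ((TensorProduct.mk K H H).flip l) (ℛ K k)

lemma B_rcounit :
    (TensorProduct.rid K (H ⊗[K] H)).toLinearMap
        ∘ₗ (cu K H).lTensor (H ⊗[K] H) ∘ₗ YDL.rcoactB K H = LinearMap.id := by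
  apply TensorProduct.ext'; intro k l
  simp only [LinearMap.comp_apply, LinearMap.id_apply]
  rw [rcoactB_tmul]
  have aux : ∀ z : H ⊗[K] H,
      (TensorProduct.rid K (H ⊗[K] H)).toLinearMap
        ((cu K H).lTensor (H ⊗[K] H) ((TensorProduct.assoc K H H H).symm (k ⊗ₜ z)))
      = k ⊗ₜ ((TensorProduct.rid K H).toLinearMap ((cu K H).lTensor H z)) := by
    intro z
    induction z using TensorProduct.induction_on with
    | zero => simp
    | tmul v w => simp [TensorProduct.assoc_symm_tmul, TensorProduct.tmul_smul]
    | add z₁ z₂ h₁ h₂ => simp only [TensorProduct.tmul_add, map_add, h₁, h₂]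
  rw [aux]
  have hred := LinearMap.congr_fun (red_rcounit K H) l
  simp only [LinearMap.comp_apply, LinearMap.id_apply] at hred
  rw [hred]

lemma B_long24 :
    YDL.rcoactB K H ∘ₗ YDL.lactB K H
      = (YDL.lactB K H).rTensor H
          ∘ₗ (TensorProduct.assoc K H (H ⊗[K] H) H).symm.toLinearMap
          ∘ₗ (YDL.rcoactB K H).lTensor H := by
  apply TensorProduct.ext'; intro h m
  induction m using TensorProduct.induction_on with
  | zero => simp
  | tmul k l =>
      simp only [LinearMap.comp_apply, LinearMap.lTensor_tmul]
      rw [lactB_tmul, rcoactB_tmul, rcoactB_tmul]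
      have aux : ∀ z : H ⊗[K] H,
          (YDL.lactB K H).rTensor H
            ((TensorProduct.assoc K H (H ⊗[K] H) H).symm.toLinearMap
              (h ⊗ₜ ((TensorProduct.assoc K H H H).symm (k ⊗ₜ z))))
          = (TensorProduct.assoc K H H H).symm (YDL.ad K H (h ⊗ₜ k) ⊗ₜ z) := by
        intro z
        induction z using TensorProduct.induction_on with
        | zero => simp
        | tmul v w =>
            simp only [TensorProduct.assoc_symm_tmul, LinearEquiv.coe_coe,
              LinearMap.rTensor_tmul, lactB_tmul]
        | add z₁ z₂ h₁ h₂ => simp only [TensorProduct.tmul_add, map_add, h₁, h₂]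
      rw [aux]
  | add m₁ m₂ h₁ h₂ =>
      simp only [TensorProduct.tmul_add, map_add, h₁, h₂]

lemma B_long26 :
    YDL.lcoactB K H ∘ₗ YDL.ractB K H
      = (YDL.ractB K H).lTensor H
          ∘ₗ (TensorProduct.assoc K H (H ⊗[K] H) H).toLinearMap
          ∘ₗ (YDL.lcoactB K H).rTensor H := by
  apply TensorProduct.ext'; intro m h
  induction m using TensorProduct.induction_on with
  | zero => simp
  | tmul k l =>
      simp only [LinearMap.comp_apply, LinearMap.rTensor_tmul]
      rw [ractB_tmul, lcoactB_repr K H k (l * h) (ℛ K k), lcoactB_repr K H k l (ℛ K k),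
        TensorProduct.sum_tmul]
      simp only [map_sum, LinearEquiv.coe_coe, TensorProduct.assoc_tmul,
        LinearMap.lTensor_tmul, ractB_tmul]
  | add m₁ m₂ h₁ h₂ =>
      simp only [TensorProduct.add_tmul, map_add, h₁, h₂]

lemma B_bicomod :
    (YDL.rcoactB K H).lTensor H ∘ₗ YDL.lcoactB K H
      = (TensorProduct.assoc K H (H ⊗[K] H) H).toLinearMap
          ∘ₗ (YDL.lcoactB K H).rTensor H ∘ₗ YDL.rcoactB K H := by
  apply TensorProduct.ext'; intro k l
  simp only [LinearMap.comp_apply]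
  rw [lcoactB_repr K H k l (ℛ K k), rcoactB_tmul, map_sum]
  have aux : ∀ z : H ⊗[K] H,
      (TensorProduct.assoc K H (H ⊗[K] H) H).toLinearMap
        ((YDL.lcoactB K H).rTensor H ((TensorProduct.assoc K H H H).symm (k ⊗ₜ z)))
      = ∑ i ∈ (ℛ K k).index,
          (ℛ K k).left i ⊗ₜ ((TensorProduct.assoc K H H H).symm ((ℛ K k).right i ⊗ₜ z)) := by
    intro z
    induction z using TensorProduct.induction_on with
    | zero => simp
    | tmul v w =>
        simp only [TensorProduct.assoc_symm_tmul, LinearEquiv.coe_coe,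
          LinearMap.rTensor_tmul]
        rw [lcoactB_repr K H k v (ℛ K k), TensorProduct.sum_tmul, map_sum]
        simp
    | add z₁ z₂ h₁ h₂ =>
        rw [TensorProduct.tmul_add, map_add, map_add, map_add, h₁, h₂,
          ← Finset.sum_add_distrib]
        exact Finset.sum_congr rfl fun i _ => by
          simp only [TensorProduct.tmul_add, map_add]
  rw [aux]
  refine Finset.sum_congr rfl fun i _ => ?_
  rw [LinearMap.lTensor_tmul, rcoactB_tmul]

lemma B_rcoassoc :
    (TensorProduct.assoc K (H ⊗[K] H) H H).toLinearMap
        ∘ₗ (YDL.rcoactB K H).rTensor H ∘ₗ YDL.rcoactB K H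
      = (cm K H).lTensor (H ⊗[K] H) ∘ₗ YDL.rcoactB K H := by
  apply TensorProduct.ext'; intro k l
  simp only [LinearMap.comp_apply]
  rw [rcoactB_tmul]
  have auxB : ∀ z : H ⊗[K] H,
      (cm K H).lTensor (H ⊗[K] H) ((TensorProduct.assoc K H H H).symm (k ⊗ₜ z))
      = (TensorProduct.assoc K H H (H ⊗[K] H)).symm.toLinearMap
          (k ⊗ₜ ((cm K H).lTensor H z)) := by
    intro z
    induction z using TensorProduct.induction_on with
    | zero => simp
    | tmul v w =>
        simp [TensorProduct.assoc_symm_tmul]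
    | add z₁ z₂ h₁ h₂ => simp only [TensorProduct.tmul_add, map_add, h₁, h₂]
  have auxInner : ∀ (y : H ⊗[K] H) (w : H),
      (TensorProduct.assoc K (H ⊗[K] H) H H).toLinearMap
          (((TensorProduct.assoc K H H H).symm (k ⊗ₜ y)) ⊗ₜ w)
        = (TensorProduct.assoc K H H (H ⊗[K] H)).symm.toLinearMap
            (k ⊗ₜ ((TensorProduct.assoc K H H H).toLinearMap (y ⊗ₜ w))) := by
    intro y w
    induction y using TensorProduct.induction_on with
    | zero => simp
    | tmul p q => simp [TensorProduct.assoc_symm_tmul]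
    | add y₁ y₂ h₁ h₂ =>
        simp only [TensorProduct.add_tmul, TensorProduct.tmul_add, map_add, h₁, h₂]
  have auxA : ∀ z : H ⊗[K] H,
      (TensorProduct.assoc K (H ⊗[K] H) H H).toLinearMap
        ((YDL.rcoactB K H).rTensor H ((TensorProduct.assoc K H H H).symm (k ⊗ₜ z)))
      = (TensorProduct.assoc K H H (H ⊗[K] H)).symm.toLinearMap
          (k ⊗ₜ ((TensorProduct.assoc K H H H).toLinearMap
            ((YDL.c2 K H).rTensor H z))) := by
    intro z
    induction z using TensorProduct.induction_on with
    | zero => simp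
    | tmul v w =>
        simp only [TensorProduct.assoc_symm_tmul, LinearEquiv.coe_coe,
          LinearMap.rTensor_tmul]
        rw [rcoactB_tmul]
        exact auxInner (YDL.c2 K H v) w
    | add z₁ z₂ h₁ h₂ => simp only [TensorProduct.tmul_add, map_add, h₁, h₂]
  rw [auxA, auxB]
  have hred := LinearMap.congr_fun (red_rcoassoc K H) l
  simp only [LinearMap.comp_apply] at hred
  rw [hred]

end Plumb2

section Yd23

variable (K : Type) [Field K] (H : Type) [Ring H] [HopfAlgebra K H]

open YDL

lemma W1_tmul (h k : H) :
    cv (cm K H ∘ₗ YDL.ad K H) (i1 K H ∘ₗ p1 K H) (h ⊗ₜ k)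
      = ∑ i ∈ (ℛ K h).index,
          cm K H (YDL.ad K H ((ℛ K h).left i ⊗ₜ k)) * ((ℛ K h).right i ⊗ₜ[K] (1 : H)) := by
  rw [cv_tmul K H _ _ (ℛ K h) (ℛ K k)]
  refine Finset.sum_congr rfl fun i _ => ?_
  have hc := sum_smul_counit_map (K := K)
    (f := LinearMap.mulRight K ((ℛ K h).right i ⊗ₜ[K] (1 : H)) ∘ₗ cm K H ∘ₗ YDL.ad K H
      ∘ₗ TensorProduct.mk K H H ((ℛ K h).left i)) (ℛ K k)
  simp only [LinearMap.comp_apply, LinearMap.mulRight_apply, TensorProduct.mk_apply] at hc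
  rw [← hc]
  refine Finset.sum_congr rfl fun j _ => ?_
  simp only [LinearMap.comp_apply, p1_apply, map_smul, i1_apply, mul_smul_comm]

lemma W2_tmul (h k : H) :
    cv (i1 K H ∘ₗ mu K H) (i2 K H ∘ₗ YDL.ad K H) (h ⊗ₜ k)
      = ∑ i ∈ (ℛ K h).index, ∑ j ∈ (ℛ K k).index,
          ((ℛ K h).left i * (ℛ K k).left j)
            ⊗ₜ[K] YDL.ad K H ((ℛ K h).right i ⊗ₜ (ℛ K k).right j) := by
  rw [cv_tmul K H _ _ (ℛ K h) (ℛ K k)]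
  refine Finset.sum_congr rfl fun i _ => Finset.sum_congr rfl fun j _ => ?_
  simp only [LinearMap.comp_apply, i1_apply, i2_apply, LinearMap.mul'_apply,
    Algebra.TensorProduct.tmul_mul_tmul, one_mul, mul_one]

lemma B_yd23 :
    (mu K H).rTensor (H ⊗[K] H)
        ∘ₗ (TensorProduct.comm K H H).toLinearMap.rTensor (H ⊗[K] H)
        ∘ₗ (TensorProduct.assoc K H H (H ⊗[K] H)).symm.toLinearMap
        ∘ₗ (YDL.lcoactB K H).lTensor H ∘ₗ (YDL.lactB K H).lTensor H
        ∘ₗ (TensorProduct.assoc K H H (H ⊗[K] H)).toLinearMap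
        ∘ₗ (TensorProduct.comm K H H).toLinearMap.rTensor (H ⊗[K] H)
        ∘ₗ (cm K H).rTensor (H ⊗[K] H)
      = TensorProduct.map (mu K H) (YDL.lactB K H)
        ∘ₗ (tensorTensorTensorComm K H H H (H ⊗[K] H)).toLinearMap
        ∘ₗ TensorProduct.map (cm K H) (YDL.lcoactB K H) := by
  apply TensorProduct.ext'; intro h m
  induction m using TensorProduct.induction_on with
  | zero => simp
  | add m₁ m₂ h₁ h₂ => simp only [TensorProduct.tmul_add, map_add, h₁, h₂]
  | tmul k l =>
    have aux1 : ∀ (w : H) (z : H ⊗[K] H),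
        (mu K H).rTensor (H ⊗[K] H)
          ((TensorProduct.comm K H H).toLinearMap.rTensor (H ⊗[K] H)
            ((TensorProduct.assoc K H H (H ⊗[K] H)).symm.toLinearMap
              (w ⊗ₜ thetaL K H l z)))
        = thetaL K H l (z * (w ⊗ₜ 1)) := by
      intro w z
      induction z using TensorProduct.induction_on with
      | zero => simp
      | tmul u v =>
          simp only [thetaL_tmul, LinearEquiv.coe_coe, TensorProduct.assoc_symm_tmul,
            LinearMap.rTensor_tmul, TensorProduct.comm_tmul, LinearMap.mul'_apply,
            Algebra.TensorProduct.tmul_mul_tmul, mul_one]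
      | add z₁ z₂ h₁ h₂ =>
          simp only [map_add, TensorProduct.tmul_add, add_mul, h₁, h₂]
    simp only [LinearMap.comp_apply]
    calc (mu K H).rTensor (H ⊗[K] H)
          ((TensorProduct.comm K H H).toLinearMap.rTensor (H ⊗[K] H)
            ((TensorProduct.assoc K H H (H ⊗[K] H)).symm.toLinearMap
              ((YDL.lcoactB K H).lTensor H ((YDL.lactB K H).lTensor H
                ((TensorProduct.assoc K H H (H ⊗[K] H)).toLinearMap
                  ((TensorProduct.comm K H H).toLinearMap.rTensor (H ⊗[K] H)
                    ((cm K H).rTensor (H ⊗[K] H) (h ⊗ₜ (k ⊗ₜ l)))))))))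
        = ∑ i ∈ (ℛ K h).index,
            (mu K H).rTensor (H ⊗[K] H)
              ((TensorProduct.comm K H H).toLinearMap.rTensor (H ⊗[K] H)
                ((TensorProduct.assoc K H H (H ⊗[K] H)).symm.toLinearMap
                  ((ℛ K h).right i ⊗ₜ thetaL K H l
                    (cm K H (YDL.ad K H ((ℛ K h).left i ⊗ₜ k)))))) := by
          rw [LinearMap.rTensor_tmul,
            show cm K H h = ∑ i ∈ (ℛ K h).index, (ℛ K h).left i ⊗ₜ[K] (ℛ K h).right i from
              (ℛ K h).eq.symm, TensorProduct.sum_tmul]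
          simp only [map_sum, LinearMap.rTensor_tmul, LinearEquiv.coe_coe,
            TensorProduct.comm_tmul, TensorProduct.assoc_tmul, LinearMap.lTensor_tmul,
            lactB_tmul, lcoactB_tmul]
      _ = ∑ i ∈ (ℛ K h).index,
            thetaL K H l (cm K H (YDL.ad K H ((ℛ K h).left i ⊗ₜ k))
              * ((ℛ K h).right i ⊗ₜ[K] (1 : H))) :=
          Finset.sum_congr rfl fun i _ => aux1 _ _
      _ = thetaL K H l (cv (cm K H ∘ₗ YDL.ad K H) (i1 K H ∘ₗ p1 K H) (h ⊗ₜ k)) := by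
          rw [W1_tmul, map_sum]
      _ = thetaL K H l (cv (i1 K H ∘ₗ mu K H) (i2 K H ∘ₗ YDL.ad K H) (h ⊗ₜ k)) := by
          rw [red_yd23]
      _ = TensorProduct.map (mu K H) (YDL.lactB K H)
            ((tensorTensorTensorComm K H H H (H ⊗[K] H)).toLinearMap
              (TensorProduct.map (cm K H) (YDL.lcoactB K H) (h ⊗ₜ (k ⊗ₜ l)))) := by
          rw [W2_tmul, map_sum, TensorProduct.map_tmul, lcoactB_repr K H k l (ℛ K k),
            show cm K H h = ∑ i ∈ (ℛ K h).index, (ℛ K h).left i ⊗ₜ[K] (ℛ K h).right i from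
              (ℛ K h).eq.symm, TensorProduct.sum_tmul]
          simp only [map_sum, TensorProduct.tmul_sum, LinearEquiv.coe_coe,
            tensorTensorTensorComm_tmul, TensorProduct.map_tmul, LinearMap.mul'_apply,
            lactB_tmul, thetaL_tmul]

end Yd23

section Yd25

variable (K : Type) [Field K] (H : Type) [Ring H] [HopfAlgebra K H]

open YDL

lemma L25_tmul (l h : H) :
    cv (i2 K H ∘ₗ p2 K H) (YDL.c2 K H ∘ₗ mu K H) (l ⊗ₜ h)
      = ∑ j ∈ (ℛ K h).index,
          ((1 : H) ⊗ₜ[K] (ℛ K h).left j) * YDL.c2 K H (l * (ℛ K h).right j) := by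
  rw [cv_tmul K H _ _ (ℛ K l) (ℛ K h), Finset.sum_comm]
  refine Finset.sum_congr rfl fun j _ => ?_
  have hc := sum_counit_smul_map (K := K)
    (f := LinearMap.mulLeft K ((1 : H) ⊗ₜ[K] (ℛ K h).left j) ∘ₗ YDL.c2 K H
      ∘ₗ LinearMap.mulRight K ((ℛ K h).right j)) (ℛ K l)
  simp only [LinearMap.comp_apply, LinearMap.mulLeft_apply, LinearMap.mulRight_apply] at hc
  rw [← hc]
  refine Finset.sum_congr rfl fun i _ => ?_
  simp only [LinearMap.comp_apply, p2_apply, map_smul, i2_apply, smul_mul_assoc,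
    LinearMap.mul'_apply]

lemma R25_tmul (l h : H) :
    cv (YDL.c2 K H ∘ₗ p1 K H) (cm K H ∘ₗ p2 K H) (l ⊗ₜ h)
      = YDL.c2 K H l * cm K H h := by
  have hs := LinearMap.congr_fun (split12 K H (YDL.c2 K H) (cm K H)) (l ⊗ₜ[K] h)
  simpa using hs

lemma B_yd25 :
    (mu K H).lTensor (H ⊗[K] H)
        ∘ₗ (TensorProduct.comm K H H).toLinearMap.lTensor (H ⊗[K] H)
        ∘ₗ (TensorProduct.assoc K (H ⊗[K] H) H H).toLinearMap
        ∘ₗ (YDL.rcoactB K H).rTensor H ∘ₗ (YDL.ractB K H).rTensor H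
        ∘ₗ (TensorProduct.assoc K (H ⊗[K] H) H H).symm.toLinearMap
        ∘ₗ (TensorProduct.comm K H H).toLinearMap.lTensor (H ⊗[K] H)
        ∘ₗ (cm K H).lTensor (H ⊗[K] H)
      = TensorProduct.map (YDL.ractB K H) (mu K H)
        ∘ₗ (tensorTensorTensorComm K (H ⊗[K] H) H H H).toLinearMap
        ∘ₗ TensorProduct.map (YDL.rcoactB K H) (cm K H) := by
  apply TensorProduct.ext'; intro m h
  induction m using TensorProduct.induction_on with
  | zero => simp
  | add m₁ m₂ h₁ h₂ => simp only [TensorProduct.add_tmul, map_add, h₁, h₂]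
  | tmul k l =>
    have aux25 : ∀ (w : H) (z : H ⊗[K] H),
        (mu K H).lTensor (H ⊗[K] H)
          ((TensorProduct.comm K H H).toLinearMap.lTensor (H ⊗[K] H)
            ((TensorProduct.assoc K (H ⊗[K] H) H H).toLinearMap
              (((TensorProduct.assoc K H H H).symm (k ⊗ₜ z)) ⊗ₜ w)))
        = thetaR K H k (((1 : H) ⊗ₜ[K] w) * z) := by
      intro w z
      induction z using TensorProduct.induction_on with
      | zero => simp
      | tmul u v =>
          simp only [LinearEquiv.coe_coe, TensorProduct.assoc_symm_tmul,
            TensorProduct.assoc_tmul, LinearMap.lTensor_tmul, TensorProduct.comm_tmul,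
            LinearMap.mul'_apply, Algebra.TensorProduct.tmul_mul_tmul, one_mul,
            thetaR_tmul]
      | add z₁ z₂ h₁ h₂ =>
          simp only [map_add, TensorProduct.tmul_add, TensorProduct.add_tmul,
            mul_add, h₁, h₂]
    have aux25b : ∀ (z : H ⊗[K] H) (w₁ w₂ : H),
        TensorProduct.map (YDL.ractB K H) (mu K H)
          ((tensorTensorTensorComm K (H ⊗[K] H) H H H).toLinearMap
            (((TensorProduct.assoc K H H H).symm (k ⊗ₜ z)) ⊗ₜ (w₁ ⊗ₜ w₂)))
        = thetaR K H k (z * (w₁ ⊗ₜ[K] w₂)) := by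
      intro z w₁ w₂
      induction z using TensorProduct.induction_on with
      | zero => simp
      | tmul u v =>
          simp only [LinearEquiv.coe_coe, TensorProduct.assoc_symm_tmul,
            tensorTensorTensorComm_tmul, TensorProduct.map_tmul, ractB_tmul,
            LinearMap.mul'_apply, Algebra.TensorProduct.tmul_mul_tmul, thetaR_tmul]
      | add z₁ z₂ h₁ h₂ =>
          simp only [map_add, TensorProduct.tmul_add, TensorProduct.add_tmul,
            add_mul, h₁, h₂]
    simp only [LinearMap.comp_apply]
    calc (mu K H).lTensor (H ⊗[K] H)
          ((TensorProduct.comm K H H).toLinearMap.lTensor (H ⊗[K] H)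
            ((TensorProduct.assoc K (H ⊗[K] H) H H).toLinearMap
              ((YDL.rcoactB K H).rTensor H ((YDL.ractB K H).rTensor H
                ((TensorProduct.assoc K (H ⊗[K] H) H H).symm.toLinearMap
                  ((TensorProduct.comm K H H).toLinearMap.lTensor (H ⊗[K] H)
                    ((cm K H).lTensor (H ⊗[K] H) ((k ⊗ₜ l) ⊗ₜ h))))))))
        = ∑ j ∈ (ℛ K h).index,
            (mu K H).lTensor (H ⊗[K] H)
              ((TensorProduct.comm K H H).toLinearMap.lTensor (H ⊗[K] H)
                ((TensorProduct.assoc K (H ⊗[K] H) H H).toLinearMap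
                  (((TensorProduct.assoc K H H H).symm
                      (k ⊗ₜ YDL.c2 K H (l * (ℛ K h).right j))) ⊗ₜ (ℛ K h).left j))) := by
          rw [LinearMap.lTensor_tmul,
            show cm K H h = ∑ j ∈ (ℛ K h).index, (ℛ K h).left j ⊗ₜ[K] (ℛ K h).right j from
              (ℛ K h).eq.symm, TensorProduct.tmul_sum]
          simp only [map_sum, LinearMap.lTensor_tmul, LinearEquiv.coe_coe,
            TensorProduct.comm_tmul, TensorProduct.assoc_symm_tmul,
            LinearMap.rTensor_tmul, ractB_tmul, rcoactB_tmul]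
      _ = ∑ j ∈ (ℛ K h).index,
            thetaR K H k (((1 : H) ⊗ₜ[K] (ℛ K h).left j) * YDL.c2 K H (l * (ℛ K h).right j)) :=
          Finset.sum_congr rfl fun j _ => aux25 _ _
      _ = thetaR K H k (cv (i2 K H ∘ₗ p2 K H) (YDL.c2 K H ∘ₗ mu K H) (l ⊗ₜ h)) := by
          rw [L25_tmul, map_sum]
      _ = thetaR K H k (YDL.c2 K H l * cm K H h) := by
          rw [red_yd25, R25_tmul]
      _ = TensorProduct.map (YDL.ractB K H) (mu K H)
            ((tensorTensorTensorComm K (H ⊗[K] H) H H H).toLinearMap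
              (TensorProduct.map (YDL.rcoactB K H) (cm K H) ((k ⊗ₜ l) ⊗ₜ h))) := by
          rw [TensorProduct.map_tmul, rcoactB_tmul,
            show cm K H h = ∑ j ∈ (ℛ K h).index, (ℛ K h).left j ⊗ₜ[K] (ℛ K h).right j from
              (ℛ K h).eq.symm, TensorProduct.tmul_sum, map_sum, map_sum]
          rw [Finset.mul_sum, map_sum]
          exact Finset.sum_congr rfl fun j _ => (aux25b _ _ _).symm

end Yd25

end YDLProof

/-- `H₂ = H ⊗ H` with the given structure maps is a
Yetter–Drinfel'd–Long bimodule over `H`. -/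
theorem statement1 (K : Type) [Field K] (H : Type) [Ring H] [HopfAlgebra K H] :
    YDL.IsYDLong K H (H ⊗[K] H)
      (YDL.lactB K H) (YDL.ractB K H) (YDL.lcoactB K H) (YDL.rcoactB K H) := by
  exact {
    lact_one := YDLProof.B_lact_one K H
    lact_mul := YDLProof.B_lact_mul K H
    ract_one := YDLProof.B_ract_one K H
    ract_mul := YDLProof.B_ract_mul K H
    bimod := YDLProof.B_bimod K H
    lcoassoc := YDLProof.B_lcoassoc K H
    lcounit := YDLProof.B_lcounit K H
    rcoassoc := YDLProof.B_rcoassoc K H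
    rcounit := YDLProof.B_rcounit K H
    bicomod := YDLProof.B_bicomod K H
    yd23 := YDLProof.B_yd23 K H
    long24 := YDLProof.B_long24 K H
    yd25 := YDLProof.B_yd25 K H
    long26 := YDLProof.B_long26 K H }
end
end

section
/- Let H be a Hopf algebra with bijective antipode. Consider the Yetter-Drinfel'd-Long bimodules H₁=H⊗H (with h▷(k⊗l)=hk⊗l, (k⊗l)◁h=k⊗S(h₁)lh₂, ρˡ(k⊗l)=k₁S(k₃)⊗(k₂⊗l), ρʳ(k⊗l)=(k⊗l₁)⊗l₂) and H₂=H⊗H (with h▷(k⊗l)=h₁kS(h₂)⊗l, (k⊗l)◁h=k⊗lh, ρˡ(k⊗l)=k₁⊗(k₂⊗l), ρʳ(k⊗l)=(k⊗l₂)⊗S(l₁)l₃). If the canonical braiding ψ_{M,N}(m⊗n)=m₍₋₁₎▷n₍₀₎⊗m₍₀₎◁n₍₁₎ satisfies ψ_{H₂,H₁}∘ψ_{H₁,H₂}=id, then H=k, i.e., every element of H equals ε(h)·1. -/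
noncomputable section
open TensorProduct

/-!
It suffices to test the symmetry on the single tensor `(1 ⊗ 1) ⊗ (h ⊗ 1)`: `ψ_{H₁,H₂}` sends it to
`(h ⊗ 1) ⊗ (1 ⊗ 1)`, which `ψ_{H₂,H₁}` sends to `(h₁ ⊗ 1) ⊗ (h₂ ⊗ 1)`. Applying `ε` to the
second and fourth factor, `ψ_{H₂,H₁} ∘ ψ_{H₁,H₂} = id` forces `Δ h = 1 ⊗ h`, and the counit
axiom then gives `h = ε(h) 1`.
-/

namespace YDL

open Coalgebra

theorem eq_counit_smul_one_of_comul_eq_one_tmul {R A : Type*} [CommSemiring R] [Semiring A]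
    [Bialgebra R A] {a : A} (ha : comul (R := R) a = 1 ⊗ₜ[R] a) :
    a = counit (R := R) a • (1 : A) := by
  simpa [ha] using (congrArg (TensorProduct.rid R A) (lTensor_counit_comul (R := R) a)).symm

variable (K : Type) [Field K] (H : Type) [Ring H] [HopfAlgebra K H]

abbrev dropRight : H ⊗[K] H →ₗ[K] H :=
  (TensorProduct.rid K H).toLinearMap ∘ₗ (cu K H).lTensor H

theorem dropRight_comp_tmul_one : dropRight K H ∘ₗ (TensorProduct.mk K H H).flip 1 = .id := by
  ext; simp

theorem braid_H₁_H₂_one_tmul (h : H) :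
    braid K H (lcoactA K H) (ractA K H) (lactB K H) (rcoactB K H)
      ((1 ⊗ₜ[K] 1) ⊗ₜ[K] (h ⊗ₜ[K] 1)) = (h ⊗ₜ[K] 1) ⊗ₜ[K] (1 ⊗ₜ[K] 1) := by
  simp [braid, lcoactA, ractA, lactB, rcoactB, c1, c2, ad, adR, Algebra.TensorProduct.one_def]

theorem braid_H₂_H₁_tmul_one (h : H) :
    braid K H (lcoactB K H) (ractB K H) (lactA K H) (rcoactA K H)
      ((h ⊗ₜ[K] 1) ⊗ₜ[K] (1 ⊗ₜ[K] 1))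
      = TensorProduct.map ((TensorProduct.mk K H H).flip 1) ((TensorProduct.mk K H H).flip 1)
          (cm K H h) := by
  simp only [braid, lcoactB, rcoactA, LinearMap.comp_apply, TensorProduct.map_tmul,
    LinearEquiv.coe_coe, LinearMap.rTensor_tmul, LinearMap.lTensor_tmul]
  induction cm K H h using TensorProduct.induction_on with
  | zero => simp
  | tmul a b => simp [lactA, ractB, Algebra.TensorProduct.one_def]
  | add x y hx hy => simp only [add_tmul, map_add, hx, hy]

end YDL

theorem statement2_general (K : Type) [Field K] (H : Type) [Ring H] [HopfAlgebra K H]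
    (hsym :
      YDL.braid K H (YDL.lcoactB K H) (YDL.ractB K H) (YDL.lactA K H) (YDL.rcoactA K H)
        ∘ₗ YDL.braid K H (YDL.lcoactA K H) (YDL.ractA K H) (YDL.lactB K H) (YDL.rcoactB K H)
      = LinearMap.id) :
    ∀ h : H, h = (YDL.cu K H h) • (1 : H) := by
  intro h
  have hψ := LinearMap.congr_fun hsym ((1 ⊗ₜ[K] 1) ⊗ₜ[K] (h ⊗ₜ[K] 1))
  rw [LinearMap.comp_apply, YDL.braid_H₁_H₂_one_tmul, YDL.braid_H₂_H₁_tmul_one,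
    LinearMap.id_apply] at hψ
  have hcomul : YDL.cm K H h = 1 ⊗ₜ[K] h := by
    have := congrArg (TensorProduct.map (YDL.dropRight K H) (YDL.dropRight K H)) hψ
    rw [← LinearMap.comp_apply, ← TensorProduct.map_comp, YDL.dropRight_comp_tmul_one,
      TensorProduct.map_id, LinearMap.id_apply] at this
    simpa using this
  exact YDL.eq_counit_smul_one_of_comul_eq_one_tmul hcomul

/-- if `ψ_{H₂,H₁} ∘ ψ_{H₁,H₂} = id`, then `H = k`,
i.e. every element of `H` is `ε(h) • 1`. -/
theorem statement2 (K : Type) [Field K] (H : Type) [Ring H] [HopfAlgebra K H]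
    (hS : Function.Bijective (YDL.sa K H))
    (hsym :
      YDL.braid K H (YDL.lcoactB K H) (YDL.ractB K H) (YDL.lactA K H) (YDL.rcoactA K H)
        ∘ₗ YDL.braid K H (YDL.lcoactA K H) (YDL.ractA K H) (YDL.lactB K H) (YDL.rcoactB K H)
      = LinearMap.id) :
    ∀ h : H, h = (YDL.cu K H h) • (1 : H) :=
  statement2_general K H hsym
end
end

section
/- Let H be a cocommutative Hopf algebra (with bijective antipode). Then the canonical braiding ψ_{H₁,H₂}:H₁⊗H₂→H₂⊗H₁ of the Yetter-Drinfel'd-Long category is the usual flip map: ψ_{H₁,H₂}(g⊗h⊗k⊗l)=k⊗l⊗g⊗h. -/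
noncomputable section
open TensorProduct

/-!
Cocommutativity trivialises the two coactions the braiding uses: `k₁ S(k₃) ⊗ k₂ = k₁ S(k₂) ⊗ k₃
= 1 ⊗ k` and `l₂ ⊗ S(l₁) l₃ = l ⊗ 1`, so `ρˡ` on `H₁` and `ρʳ` on `H₂` are `x ↦ 1 ⊗ x` and
`x ↦ x ⊗ 1`. The braiding is then built from the unit actions `1 ▷ -` and `- ◁ 1`, which are the
identity in any Hopf algebra, so only the flip is left.
-/

namespace YDL

theorem braid_eq_comm_of_trivial_coactions {K : Type} [Field K] {H : Type} [Ring H]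
    [HopfAlgebra K H] {M N : Type} [AddCommGroup M] [Module K M] [AddCommGroup N] [Module K N]
    {lcoactM : M →ₗ[K] H ⊗[K] M} {ractM : M ⊗[K] H →ₗ[K] M}
    {lactN : H ⊗[K] N →ₗ[K] N} {rcoactN : N →ₗ[K] N ⊗[K] H}
    (hlcoact : ∀ m, lcoactM m = 1 ⊗ₜ m) (hract : ∀ m, ractM (m ⊗ₜ 1) = m)
    (hlact : ∀ n, lactN (1 ⊗ₜ n) = n) (hrcoact : ∀ n, rcoactN n = n ⊗ₜ 1) :
    braid K H lcoactM ractM lactN rcoactN = (TensorProduct.comm K M N).toLinearMap := by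
  ext m n
  simp [braid, hlcoact, hract, hlact, hrcoact]

variable (K : Type) [Field K] (H : Type) [Ring H] [HopfAlgebra K H]

theorem ad_one_tmul (x : H) : ad K H (1 ⊗ₜ x) = x := by
  simp [ad, Bialgebra.comul_one, Algebra.TensorProduct.one_def, HopfAlgebra.antipode_one]

theorem adR_tmul_one (x : H) : adR K H (x ⊗ₜ 1) = x := by
  simp [adR, Bialgebra.comul_one, Algebra.TensorProduct.one_def, HopfAlgebra.antipode_one]

theorem lactB_one_tmul (x : H ⊗[K] H) : lactB K H (1 ⊗ₜ x) = x := by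
  induction x using TensorProduct.induction_on with
  | zero => simp
  | tmul k l => simp [lactB, ad_one_tmul]
  | add x y hx hy => simp only [tmul_add, map_add, hx, hy]

theorem ractA_tmul_one (x : H ⊗[K] H) : ractA K H (x ⊗ₜ 1) = x := by
  induction x using TensorProduct.induction_on with
  | zero => simp
  | tmul k l => simp [ractA, adR_tmul_one]
  | add x y hx hy => simp only [add_tmul, map_add, hx, hy]

variable [Coalgebra.IsCocomm K H]

theorem c1_eq_mk_one : c1 K H = TensorProduct.mk K H H 1 := by
  -- `coassoc_simps` uses cocommutativity to absorb the flip, leaving `(k₁ S(k₂)) ⊗ k₃`.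
  simp only [c1, coassoc_simps]
  rw [← LinearMap.lTensor_def, HopfAlgebra.mul_antipode_lTensor_comul, ← LinearMap.rTensor_def,
    LinearMap.rTensor_comp, LinearMap.comp_assoc, Coalgebra.rTensor_counit_comp_comul]
  ext
  simp

theorem c2_eq_flip_mk_one : c2 K H = (TensorProduct.mk K H H).flip 1 := by
  simp only [c2, coassoc_simps]
  rw [← LinearMap.rTensor_def, HopfAlgebra.mul_antipode_rTensor_comul, ← LinearMap.lTensor_def,
    LinearMap.lTensor_comp, LinearMap.comp_assoc, Coalgebra.lTensor_counit_comp_comul]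
  ext
  simp

theorem lcoactA_apply_of_isCocomm (x : H ⊗[K] H) : lcoactA K H x = 1 ⊗ₜ x := by
  induction x using TensorProduct.induction_on with
  | zero => simp
  | tmul k l => simp [lcoactA, c1_eq_mk_one]
  | add x y hx hy => simp only [tmul_add, map_add, hx, hy]

theorem rcoactB_apply_of_isCocomm (x : H ⊗[K] H) : rcoactB K H x = x ⊗ₜ 1 := by
  induction x using TensorProduct.induction_on with
  | zero => simp
  | tmul k l => simp [rcoactB, c2_eq_flip_mk_one]
  | add x y hx hy => simp only [add_tmul, map_add, hx, hy]

end YDL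

/-- over a cocommutative Hopf algebra, the braiding
`ψ_{H₁,H₂}` is the usual flip map. -/
theorem statement4 (K : Type) [Field K] (H : Type) [Ring H] [HopfAlgebra K H]
    (hcc : ∀ h : H, (TensorProduct.comm K H H) (YDL.cm K H h) = YDL.cm K H h) :
    YDL.braid K H (YDL.lcoactA K H) (YDL.ractA K H) (YDL.lactB K H) (YDL.rcoactB K H)
      = (TensorProduct.comm K (H ⊗[K] H) (H ⊗[K] H)).toLinearMap := by
  have : Coalgebra.IsCocomm K H := ⟨LinearMap.ext hcc⟩
  exact YDL.braid_eq_comm_of_trivial_coactions (YDL.lcoactA_apply_of_isCocomm K H)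
    (YDL.ractA_tmul_one K H) (YDL.lactB_one_tmul K H) (YDL.rcoactB_apply_of_isCocomm K H)
end
end

section
/- Let H be a Hopf algebra. If H₁=H⊗H (with structures h▷(k⊗l)=hk⊗l, (k⊗l)◁h=k⊗S(h₁)lh₂, ρˡ(k⊗l)=k₁S(k₃)⊗(k₂⊗l), ρʳ(k⊗l)=(k⊗l₁)⊗l₂) satisfies the u-condition m₍₋₁₎▷m₍₀₎₍₀₎◁m₍₀₎₍₁₎=m, then S²=id. (Proof route: the u-condition at k⊗1 gives k₁S(k₃)k₂=k for all k, which implies S(k₂)k₁=ε(k)1, hence S²=id.) -/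
noncomputable section
open TensorProduct

/-!
Evaluating the `u`-condition at `k ⊗ 1` gives `k₁ S(k₃) k₂ = k`, i.e. `id ⋆ g = id` in the
convolution ring of `End H`, where `g(k) = S(k₂) k₁`. Since `S` is the convolution inverse of `id`,
this forces `g = ηε`. As `S` is an anti-homomorphism, `S ⋆ S² = S ∘ g = ηε`, and therefore
`S² = id ⋆ S ⋆ S² = id`.
-/

open WithConv Coalgebra

namespace LinearMap

variable {R A : Type*} [CommSemiring R] [Semiring A] [Algebra R A]

lemma mul'_rTensor_mul'_assoc_symm_tmul (a : A) (t : A ⊗[R] A) :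
    mul' R A ((mul' R A).rTensor A ((TensorProduct.assoc R A A A).symm (a ⊗ₜ t)))
      = a * mul' R A t := by
  induction t using TensorProduct.induction_on with
  | zero => simp
  | add x y hx hy => simp_all [tmul_add, mul_add]
  | tmul x y => simp [mul_assoc]

end LinearMap

namespace HopfAlgebra

variable {R A : Type*} [CommSemiring R] [Semiring A] [HopfAlgebra R A]

variable (R A) in
/-- `a ↦ S(a₂) a₁`. -/
def antipodeMulFlip : A →ₗ[R] A :=
  LinearMap.mul' R A ∘ₗ (antipode R).rTensor A ∘ₗ (TensorProduct.comm R A A).toLinearMap ∘ₗ comul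

lemma eq_one_of_id_convMul_eq_id {g : WithConv (A →ₗ[R] A)}
    (h : toConv LinearMap.id * g = toConv LinearMap.id) : g = 1 := by
  rw [← one_mul g, ← LinearMap.antipode_mul_id, mul_assoc, h, LinearMap.antipode_mul_id]

lemma antipode_convMul_antipode_comp_antipode :
    toConv (antipode R (A := A)) * toConv (antipode R ∘ₗ antipode R)
      = toConv (antipode R ∘ₗ antipodeMulFlip R A) := by
  have h : LinearMap.mul' R A ∘ₗ map (antipode R) (antipode R ∘ₗ antipode R)
      = antipode R ∘ₗ LinearMap.mul' R A ∘ₗ (antipode R).rTensor A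
          ∘ₗ (TensorProduct.comm R A A).toLinearMap := by
    ext a b
    simp [antipode_mul_antidistrib]
  simp only [LinearMap.convMul_def, antipodeMulFlip, ← LinearMap.comp_assoc, h]

lemma antipode_comp_antipode_eq_id (h : toConv (antipodeMulFlip R A) = 1) :
    antipode R ∘ₗ antipode R = (LinearMap.id : A →ₗ[R] A) := by
  have hg : antipodeMulFlip R A = Algebra.linearMap R A ∘ₗ counit := congr(ofConv $h)
  have hS : toConv (antipode R (A := A)) * toConv (antipode R ∘ₗ antipode R) = 1 := by
    rw [antipode_convMul_antipode_comp_antipode, hg, LinearMap.convOne_def]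
    congr 1
    ext
    simp [Algebra.algebraMap_eq_smul_one]
  apply toConv_injective
  calc toConv (antipode R ∘ₗ antipode R)
      = toConv LinearMap.id * toConv (antipode R) * toConv (antipode R ∘ₗ antipode R) := by
        rw [LinearMap.id_mul_antipode, one_mul]
    _ = toConv LinearMap.id := by rw [mul_assoc, hS, mul_one]

end HopfAlgebra

namespace YDL

variable (K : Type) [Field K] (H : Type) [Ring H] [HopfAlgebra K H]

lemma mu_comp_c1 :
    mu K H ∘ₗ c1 K H
      = (toConv LinearMap.id * toConv (HopfAlgebra.antipodeMulFlip K H)).ofConv := by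
  have h : mu K H ∘ₗ (mu K H).rTensor H ∘ₗ (TensorProduct.assoc K H H H).symm.toLinearMap
        ∘ₗ ((sa K H).rTensor H ∘ₗ (TensorProduct.comm K H H).toLinearMap).lTensor H
        ∘ₗ (cm K H).lTensor H
      = mu K H ∘ₗ map LinearMap.id (HopfAlgebra.antipodeMulFlip K H) := by
    ext a b
    simp [HopfAlgebra.antipodeMulFlip, LinearMap.mul'_rTensor_mul'_assoc_symm_tmul]
  ext k
  exact LinearMap.congr_fun h (cm K H k)

lemma uMap_tmul_one (k : H) :
    uMap K H (lactA K H) (ractA K H) (lcoactA K H) (rcoactA K H) (k ⊗ₜ 1)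
      = mu K H (c1 K H k) ⊗ₜ 1 := by
  suffices h : ∀ t : H ⊗[K] H, lactA K H ((ractA K H).lTensor H ((rcoactA K H).lTensor H
      (TensorProduct.assoc K H H H (t ⊗ₜ 1)))) = mu K H t ⊗ₜ 1 from h (c1 K H k)
  intro t
  induction t using TensorProduct.induction_on with
  | zero => simp
  | add x y hx hy => simp_all [add_tmul]
  | tmul a b => simp [lactA, ractA, rcoactA, adR, Algebra.TensorProduct.one_def]

end YDL

/-- if `H₁` satisfies the `u`-condition, then `S² = id`. -/
theorem statement7 (K : Type) [Field K] (H : Type) [Ring H] [HopfAlgebra K H]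
    (hu : YDL.uMap K H (YDL.lactA K H) (YDL.ractA K H) (YDL.lcoactA K H) (YDL.rcoactA K H)
      = LinearMap.id) :
    YDL.sa K H ∘ₗ YDL.sa K H = LinearMap.id := by
  have hc1 : YDL.mu K H ∘ₗ YDL.c1 K H = LinearMap.id := by
    ext k
    simpa [YDL.uMap_tmul_one] using
      congr(TensorProduct.rid K H ((YDL.cu K H).lTensor H ($hu (k ⊗ₜ 1))))
  refine HopfAlgebra.antipode_comp_antipode_eq_id (HopfAlgebra.eq_one_of_id_convMul_eq_id ?_)
  rw [← toConv_ofConv (_ * _), ← YDL.mu_comp_c1, hc1]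
end
end

section
/- Let H be a Hopf algebra. If the identity k₁·k₃·S(k₂)=k holds for all k∈H, then k₂S(k₁)=ε(k)1 for all k∈H, and hence S²=id. -/
noncomputable section
open TensorProduct

/-
In the convolution monoid of linear endomorphisms of `H`, the hypothesis reads `id * g = id` for
`g k = k₂ S(k₁)`. Multiplying on the left by `S`, the convolution inverse of `id`, gives `g = ηε`.
Since `S` is an anti-homomorphism, `S ∘ g = S² * S`; hence `S² * S = ηε` and `S² = S² * S * id = id`.
-/

namespace HopfAlgebra

open Coalgebra TensorProduct WithConv LinearMap

variable {R A : Type*} [CommSemiring R] [Semiring A] [HopfAlgebra R A]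

variable (R A) in
/-- `a ↦ a₂ S(a₁)` in Sweedler notation. -/
noncomputable def mulAntipodeFlip : A →ₗ[R] A :=
  mul' R A ∘ₗ (antipode R).lTensor A ∘ₗ (TensorProduct.comm R A A).toLinearMap ∘ₗ comul

lemma mulAntipodeFlip_eq_one_of_id_convMul
    (h : toConv LinearMap.id * toConv (mulAntipodeFlip R A) = toConv LinearMap.id) :
    toConv (mulAntipodeFlip R A) = 1 := by
  rw [← one_mul (toConv _), ← antipode_mul_id, mul_assoc, h, antipode_mul_id]

lemma toConv_antipode_comp_mulAntipodeFlip :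
    toConv (antipode R ∘ₗ mulAntipodeFlip R A) =
      toConv (antipode R ∘ₗ antipode R) * toConv (antipode R) := by
  ext a
  simp only [mulAntipodeFlip, convMul_apply, comp_apply]
  induction comul (R := R) a using TensorProduct.induction_on with
  | zero => simp
  | tmul x y => simp [antipode_mul_antidistrib]
  | add x y hx hy => simp only [map_add, hx, hy]

lemma toConv_antipode_comp_eq_one {f : A →ₗ[R] A} (hf : toConv f = 1) :
    toConv (antipode R ∘ₗ f) = 1 := by
  ext a
  have hfa : f a = algebraMap R A (counit a) := congr($hf a)
  simp [hfa, Algebra.algebraMap_eq_smul_one]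

lemma antipode_comp_antipode_eq_id_of_mulAntipodeFlip_eq_one
    (h : toConv (mulAntipodeFlip R A) = 1) : antipode R ∘ₗ antipode R = LinearMap.id (M := A) := by
  have hSSS : toConv (antipode R ∘ₗ antipode R) * toConv (antipode R (A := A)) = 1 := by
    rw [← toConv_antipode_comp_mulAntipodeFlip, toConv_antipode_comp_eq_one h]
  apply toConv_injective
  rw [← mul_one (toConv (antipode R ∘ₗ antipode R)), ← antipode_mul_id, ← mul_assoc, hSSS,
    one_mul]

end HopfAlgebra

/-- if `k₁ k₃ S(k₂) = k` for all `k`, then `k₂ S(k₁) = ε(k) 1`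
for all `k`, and hence `S² = id`. -/
theorem statement8 (K : Type) [Field K] (H : Type) [Ring H] [HopfAlgebra K H]
    (hyp : YDL.mu K H ∘ₗ (YDL.mu K H).lTensor H
        ∘ₗ ((YDL.sa K H).lTensor H).lTensor H
        ∘ₗ (TensorProduct.comm K H H).toLinearMap.lTensor H
        ∘ₗ (YDL.cm K H).lTensor H ∘ₗ YDL.cm K H = LinearMap.id) :
    (YDL.mu K H ∘ₗ (YDL.sa K H).lTensor H ∘ₗ (TensorProduct.comm K H H).toLinearMap
        ∘ₗ YDL.cm K H = YDL.eta K H ∘ₗ YDL.cu K H)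
    ∧ YDL.sa K H ∘ₗ YDL.sa K H = LinearMap.id := by
  have hconv : WithConv.toConv LinearMap.id * WithConv.toConv (HopfAlgebra.mulAntipodeFlip K H)
      = WithConv.toConv LinearMap.id := by
    change WithConv.toConv (LinearMap.mul' K H ∘ₗ (HopfAlgebra.mulAntipodeFlip K H).lTensor H
      ∘ₗ Coalgebra.comul) = _
    simp only [HopfAlgebra.mulAntipodeFlip, LinearMap.lTensor_comp, LinearMap.comp_assoc]
    exact congr(WithConv.toConv $hyp)
  have hflip := HopfAlgebra.mulAntipodeFlip_eq_one_of_id_convMul hconv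
  exact ⟨congr(WithConv.ofConv $hflip),
    HopfAlgebra.antipode_comp_antipode_eq_id_of_mulAntipodeFlip_eq_one hflip⟩
end
end
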